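/- arXiv:0907.3789 — 8 statements merged into one kernel-verified Lean document; each statement's English description precedes it below -/
import Mathlib

section
/- Every composition algebra is alternative: if C is a composition algebra over F, then (x·x)·y = x·(x·y) and y·(x·x) = (y·x)·x for all x, y ∈ C. -/
/-- A composition algebra over a field `F`: a unital (not necessarily associative)
`F`-algebra endowed with a multiplicative quadratic form whose polar bilinear form
is nondegenerate. -/
structure CompositionAlgebra (F : Type*) [Field F] (C : Type*)
    [AddCommGroup C] [Module F C] where
  mul : C →ₗ[F] C →ₗ[F] C
  one : C
  one_mul : ∀ x : C, mul one x = x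
  mul_one : ∀ x : C, mul x one = x
  n : QuadraticForm F C
  norm_mul : ∀ x y : C, n (mul x y) = n x * n y
  nondeg : ∀ x : C, (∀ y : C, QuadraticMap.polar ⇑n x y = 0) → x = 0

/-- The polar form `b(x,y) = n(x+y) - n(x) - n(y)` of the norm. -/
def CompositionAlgebra.b {F : Type*} [Field F] {C : Type*} [AddCommGroup C] [Module F C]
    (A : CompositionAlgebra F C) (x y : C) : F :=
  QuadraticMap.polar ⇑A.n x y

/-- The trace `t(x) = b(x,1)`. -/
def CompositionAlgebra.t {F : Type*} [Field F] {C : Type*} [AddCommGroup C] [Module F C]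
    (A : CompositionAlgebra F C) (x : C) : F :=
  A.b x A.one

/-- The standard involution `x̄ = t(x)·1 − x`. -/
def CompositionAlgebra.conj {F : Type*} [Field F] {C : Type*} [AddCommGroup C] [Module F C]
    (A : CompositionAlgebra F C) (x : C) : C :=
  A.t x • A.one - x

namespace CompositionAlgebra

variable {F : Type*} [Field F] {C : Type*} [AddCommGroup C] [Module F C]
variable (A : CompositionAlgebra F C)

lemma b_comm (x y : C) : A.b x y = A.b y x := QuadraticMap.polar_comm _ x y

/-- If `b(u, z) = b(v, z)` for all `z`, then `u = v`. -/
lemma eq_of_b (u v : C) (h : ∀ z, A.b u z = A.b v z) : u = v := by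
  have h0 : ∀ z : C, QuadraticMap.polar ⇑A.n (u - v) z = 0 := by
    intro z
    rw [QuadraticMap.polar_sub_left]
    have := h z
    simp only [CompositionAlgebra.b] at this
    rw [this, sub_self]
  exact sub_eq_zero.mp (A.nondeg (u - v) h0)

/-- `b(xy, xz) = n(x) b(y, z)`. -/
lemma b_mul_left (x y z : C) : A.b (A.mul x y) (A.mul x z) = A.n x * A.b y z := by
  simp only [CompositionAlgebra.b, QuadraticMap.polar]
  rw [← map_add, A.norm_mul, A.norm_mul, A.norm_mul]
  ring

/-- `b(xz, yz) = n(z) b(x, y)`. -/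
lemma b_mul_right (x y z : C) : A.b (A.mul x z) (A.mul y z) = A.n z * A.b x y := by
  simp only [CompositionAlgebra.b, QuadraticMap.polar]
  rw [← LinearMap.add_apply, ← map_add, A.norm_mul, A.norm_mul, A.norm_mul]
  ring

/-- `n(x + z) = n x + n z + b(x, z)`. -/
lemma n_add (x z : C) : A.n (x + z) = A.n x + A.n z + A.b x z := by
  simp only [CompositionAlgebra.b, QuadraticMap.polar]; ring

/-- Full linearization: `b(xy, zw) + b(zy, xw) = b(x,z) b(y,w)`. -/
lemma b_lin (x y z w : C) :
    A.b (A.mul x y) (A.mul z w) + A.b (A.mul z y) (A.mul x w) = A.b x z * A.b y w := by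
  have h := A.b_mul_left (x + z) y w
  rw [A.n_add, map_add, LinearMap.add_apply, LinearMap.add_apply] at h
  have h1 := A.b_mul_left x y w
  have h2 := A.b_mul_left z y w
  simp only [CompositionAlgebra.b] at h h1 h2 ⊢
  rw [QuadraticMap.polar_add_left, QuadraticMap.polar_add_right,
    QuadraticMap.polar_add_right] at h
  linear_combination h - h1 - h2

/-- Left adjoint identity: `b(xy, z) = t(x) b(y, z) - b(y, xz)`. -/
lemma b_adj_left (x y z : C) :
    A.b (A.mul x y) z = A.t x * A.b y z - A.b y (A.mul x z) := by
  have h := A.b_lin x y A.one z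
  rw [A.one_mul, A.one_mul] at h
  have ht : A.t x = A.b x A.one := rfl
  rw [ht]
  linear_combination h

/-- Right adjoint identity: `b(xy, z) = t(y) b(x, z) - b(x, zy)`. -/
lemma b_adj_right (x y z : C) :
    A.b (A.mul x y) z = A.t y * A.b x z - A.b x (A.mul z y) := by
  have h := A.b_lin x y z A.one
  rw [A.mul_one, A.mul_one] at h
  have ht : A.t y = A.b y A.one := rfl
  have hc := A.b_comm (A.mul z y) x
  rw [ht]
  linear_combination h - hc

/-- `x(xy) = t(x) • (xy) - n(x) • y`. -/
lemma mul_mul_left (x y : C) :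
    A.mul x (A.mul x y) = A.t x • A.mul x y - A.n x • y := by
  apply A.eq_of_b
  intro z
  have h1 := A.b_adj_left x (A.mul x y) z
  have h2 := A.b_mul_left x y z
  have hsub : A.b (A.t x • A.mul x y - A.n x • y) z
      = A.t x * A.b (A.mul x y) z - A.n x * A.b y z := by
    simp only [CompositionAlgebra.b]
    rw [QuadraticMap.polar_sub_left, QuadraticMap.polar_smul_left,
      QuadraticMap.polar_smul_left, smul_eq_mul, smul_eq_mul]
  rw [hsub]
  linear_combination h1 - h2

/-- `(yx)x = t(x) • (yx) - n(x) • y`. -/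
lemma mul_mul_right (x y : C) :
    A.mul (A.mul y x) x = A.t x • A.mul y x - A.n x • y := by
  apply A.eq_of_b
  intro z
  have h1 := A.b_adj_right (A.mul y x) x z
  have h2 := A.b_mul_right y z x
  have hsub : A.b (A.t x • A.mul y x - A.n x • y) z
      = A.t x * A.b (A.mul y x) z - A.n x * A.b y z := by
    simp only [CompositionAlgebra.b]
    rw [QuadraticMap.polar_sub_left, QuadraticMap.polar_smul_left,
      QuadraticMap.polar_smul_left, smul_eq_mul, smul_eq_mul]
  rw [hsub]
  linear_combination h1 - h2

/-- `x·x = t(x) • x - n(x) • 1`. -/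
lemma sq_eq (x : C) : A.mul x x = A.t x • x - A.n x • A.one := by
  have h := A.mul_mul_left x A.one
  rwa [A.mul_one] at h

end CompositionAlgebra

/-- Every composition algebra is alternative:
`(x·x)·y = x·(x·y)` and `y·(x·x) = (y·x)·x`. -/
theorem composition_algebra_is_alternative {F : Type*} [Field F] {C : Type*}
    [AddCommGroup C] [Module F C] [FiniteDimensional F C]
    (hF : ringChar F ≠ 2) (A : CompositionAlgebra F C) (x y : C) :
    A.mul (A.mul x x) y = A.mul x (A.mul x y) ∧
    A.mul y (A.mul x x) = A.mul (A.mul y x) x := by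
  constructor
  · rw [A.sq_eq, A.mul_mul_left]
    rw [map_sub, map_smul, map_smul, LinearMap.sub_apply, LinearMap.smul_apply,
      LinearMap.smul_apply, A.one_mul]
  · rw [A.sq_eq, A.mul_mul_right]
    rw [map_sub, map_smul, map_smul, A.mul_one]
end

section
/- In any alternative algebra A over a field F of characteristic ≠ 2, the map D_{a,b} : c ↦ [[a,b],c] + 3(a,c,b) is a derivation of A for all a, b ∈ A, i.e. D_{a,b}(c·d) = D_{a,b}(c)·d + c·D_{a,b}(d) for all c, d ∈ A. -/
/-- In an alternative algebra over a field of characteristic `≠ 2`, the map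
`D_{a,b} : c ↦ [[a,b],c] + 3(a,c,b)` is a derivation. -/
theorem inner_map_is_derivation_of_alternative {F A : Type*} [Field F]
    [AddCommGroup A] [Module F A]
    (hF : ringChar F ≠ 2)
    (mul : A →ₗ[F] A →ₗ[F] A)
    (alt_left : ∀ a b : A, mul (mul a a) b = mul a (mul a b))
    (alt_right : ∀ a b : A, mul b (mul a a) = mul (mul b a) a)
    (a b : A) (D : A → A)
    (hD : ∀ c : A,
      D c = (mul (mul a b - mul b a) c - mul c (mul a b - mul b a))
        + (3 : F) • (mul (mul a c) b - mul a (mul c b)))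
    (c d : A) :
    D (mul c d) = mul (D c) d + mul c (D d) := by
  have h2 : (2 : F) ≠ 0 := Ring.two_ne_zero hF
  have hL : ∀ u v w : A,
      mul (mul u v) w + mul (mul v u) w = mul u (mul v w) + mul v (mul u w) := by
    intro u v w
    have h := alt_left (u + v) w
    simp only [map_add, LinearMap.add_apply] at h
    linear_combination (norm := module) h - alt_left u w - alt_left v w
  have hR : ∀ u v w : A,
      mul w (mul u v) + mul w (mul v u) = mul (mul w u) v + mul (mul w v) u := by
    intro u v w
    have h := alt_right (u + v) w
    simp only [map_add, LinearMap.add_apply] at h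
    linear_combination (norm := module) h - alt_right u w - alt_right v w
  have hxL : ∀ x u v w : A,
      mul x (mul (mul u v) w) + mul x (mul (mul v u) w)
        = mul x (mul u (mul v w)) + mul x (mul v (mul u w)) := by
    intro x u v w
    have h := congrArg (fun t => mul x t) (hL u v w)
    simpa only [map_add] using h
  have hLx : ∀ u v w x : A,
      mul (mul (mul u v) w) x + mul (mul (mul v u) w) x
        = mul (mul u (mul v w)) x + mul (mul v (mul u w)) x := by
    intro u v w x
    have h := congrArg (fun t => mul t x) (hL u v w)
    simpa only [map_add, LinearMap.add_apply] using h
  have hxR : ∀ x u v w : A,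
      mul x (mul w (mul u v)) + mul x (mul w (mul v u))
        = mul x (mul (mul w u) v) + mul x (mul (mul w v) u) := by
    intro x u v w
    have h := congrArg (fun t => mul x t) (hR u v w)
    simpa only [map_add] using h
  have hRx : ∀ u v w x : A,
      mul (mul w (mul u v)) x + mul (mul w (mul v u)) x
        = mul (mul (mul w u) v) x + mul (mul (mul w v) u) x := by
    intro u v w x
    have h := congrArg (fun t => mul t x) (hR u v w)
    simpa only [map_add, LinearMap.add_apply] using h
  have key : (2 : F) • D (mul c d) = (2 : F) • (mul (D c) d + mul c (D d)) := by
    rw [hD, hD, hD]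
    simp only [map_add, map_sub, map_smul, LinearMap.add_apply, LinearMap.sub_apply,
      LinearMap.smul_apply, smul_add, smul_sub]
    linear_combination (norm := module)
      ((-1 : F)) • (hL (mul a b) c d) +
      ((-2 : F)) • (hL c d (mul a b)) +
      ((-2 : F)) • (hR (mul a b) c d) +
      ((-2 : F)) • (hR c d (mul a b)) +
      ((-2 : F)) • (hL (mul a b) d c) +
      ((3 : F)) • (hL (mul a c) b d) +
      ((-3 : F)) • (hL b c (mul a d)) +
      ((1 : F)) • (hL (mul b a) c d) +
      ((2 : F)) • (hL c d (mul b a)) +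
      ((2 : F)) • (hR (mul b a) c d) +
      ((2 : F)) • (hR c d (mul b a)) +
      ((2 : F)) • (hL (mul b a) d c) +
      ((-3 : F)) • (hL (mul b c) a d) +
      ((3 : F)) • (hL a c (mul b d)) +
      ((3 : F)) • (hL (mul c a) b d) +
      ((-3 : F)) • (hL (mul c b) a d) +
      ((6 : F)) • (hL (mul c d) a b) +
      ((3 : F)) • (hL a b (mul c d)) +
      ((6 : F)) • (hR (mul c d) a b) +
      ((6 : F)) • (hR a b (mul c d)) +
      ((6 : F)) • (hL (mul c d) b a) +
      ((-3 : F)) • (hLx a b c d) +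
      ((-6 : F)) • (hRx a b c d) +
      ((-3 : F)) • (hxL c a b d) +
      ((-6 : F)) • (hxR c a b d) +
      ((-9 : F)) • (hLx a c b d) +
      ((-6 : F)) • (hRx a c b d) +
      ((3 : F)) • (hxL b a c d) +
      ((-6 : F)) • (hxL c a d b) +
      ((-6 : F)) • (hxR c a d b) +
      ((-3 : F)) • (hLx b c a d) +
      ((-3 : F)) • (hxL a b c d) +
      ((-6 : F)) • (hxL c b d a)
  have h3 := congrArg (fun x => (2 : F)⁻¹ • x) key
  simpa only [smul_smul, inv_mul_cancel₀ h2, one_smul] using h3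
end

section
/- In any alternative algebra A over a field F of characteristic ≠ 2, the inner derivations satisfy D_{a,b} = −D_{b,a} and the cyclic identity D_{a·b, c} + D_{b·c, a} + D_{c·a, b} = 0 for all a, b, c ∈ A. -/
set_option maxHeartbeats 4000000 in
/-- In an alternative algebra over a field of characteristic `≠ 2`, the inner
derivations `D_{a,b}(c) = [[a,b],c] + 3(a,c,b)` satisfy `D_{a,b} = −D_{b,a}` and
the cyclic identity `D_{ab,c} + D_{bc,a} + D_{ca,b} = 0`. -/
theorem inner_derivations_skew_and_cyclic {F A : Type*} [Field F]
    [AddCommGroup A] [Module F A]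
    (hF : ringChar F ≠ 2)
    (mul : A →ₗ[F] A →ₗ[F] A)
    (alt_left : ∀ a b : A, mul (mul a a) b = mul a (mul a b))
    (alt_right : ∀ a b : A, mul b (mul a a) = mul (mul b a) a)
    (D : A → A → A → A)
    (hD : ∀ a b c : A,
      D a b c = (mul (mul a b - mul b a) c - mul c (mul a b - mul b a))
        + (3 : F) • (mul (mul a c) b - mul a (mul c b)))
    (a b c : A) :
    (∀ z : A, D a b z = - D b a z) ∧
    (∀ z : A, D (mul a b) c z + D (mul b c) a z + D (mul c a) b z = 0) := by
  -- linearized left alternative law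
  have hL : ∀ x y w : A, mul (mul x y) w + mul (mul y x) w
      = mul x (mul y w) + mul y (mul x w) := by
    intro x y w
    have h := alt_left (x + y) w
    simp only [map_add, LinearMap.add_apply] at h
    linear_combination (norm := module) h - alt_left x w - alt_left y w
  -- linearized right alternative law
  have hR : ∀ x y w : A, mul w (mul x y) + mul w (mul y x)
      = mul (mul w x) y + mul (mul w y) x := by
    intro x y w
    have h := alt_right (x + y) w
    simp only [map_add, LinearMap.add_apply] at h
    linear_combination (norm := module) h - alt_right x w - alt_right y w
  -- external multiplications of the linearized laws
  have hLextL : ∀ w x y u : A,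
      mul w (mul (mul x y) u) + mul w (mul (mul y x) u)
        = mul w (mul x (mul y u)) + mul w (mul y (mul x u)) := by
    intro w x y u
    rw [← map_add, ← map_add, hL]
  have hRextL : ∀ w x y u : A,
      mul (mul (mul x y) u) w + mul (mul (mul y x) u) w
        = mul (mul x (mul y u)) w + mul (mul y (mul x u)) w := by
    intro w x y u
    calc mul (mul (mul x y) u) w + mul (mul (mul y x) u) w
        = mul (mul (mul x y) u + mul (mul y x) u) w := by
          rw [map_add, LinearMap.add_apply]
      _ = mul (mul x (mul y u) + mul y (mul x u)) w := by rw [hL]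
      _ = _ := by rw [map_add, LinearMap.add_apply]
  have hLextR : ∀ w x y u : A,
      mul w (mul u (mul x y)) + mul w (mul u (mul y x))
        = mul w (mul (mul u x) y) + mul w (mul (mul u y) x) := by
    intro w x y u
    calc mul w (mul u (mul x y)) + mul w (mul u (mul y x))
        = mul w (mul u (mul x y) + mul u (mul y x)) := by rw [map_add]
      _ = mul w (mul (mul u x) y + mul (mul u y) x) := by rw [hR]
      _ = _ := by rw [map_add]
  have hRextR : ∀ w x y u : A,
      mul (mul u (mul x y)) w + mul (mul u (mul y x)) w
        = mul (mul (mul u x) y) w + mul (mul (mul u y) x) w := by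
    intro w x y u
    calc mul (mul u (mul x y)) w + mul (mul u (mul y x)) w
        = mul (mul u (mul x y) + mul u (mul y x)) w := by
          rw [map_add, LinearMap.add_apply]
      _ = mul (mul (mul u x) y + mul (mul u y) x) w := by rw [hR]
      _ = _ := by rw [map_add, LinearMap.add_apply]
  have h2 : (2 : F) ≠ 0 := Ring.two_ne_zero hF
  refine ⟨fun z => ?_, fun z => ?_⟩
  · rw [hD, hD]
    simp only [map_sub, LinearMap.sub_apply]
    linear_combination (norm := module)
      (3 : F) • hL a z b + (3 : F) • hR a b z + (3 : F) • hL z b a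
  · have key : (2 : F) • (D (mul a b) c z + D (mul b c) a z + D (mul c a) b z)
        = 0 := by
      rw [hD, hD, hD]
      simp only [map_sub, LinearMap.sub_apply]
      linear_combination (norm := module)
        ((-1 : F)) • (hL c z (mul a b)) +
        ((3 : F)) • (hL (mul a b) z c) +
        ((-2 : F)) • (hL (mul a c) b z) +
        ((-1 : F)) • (hL b z (mul a c)) +
        ((-1 : F)) • (hL (mul a c) z b) +
        ((-1 : F)) • (hL (mul a z) b c) +
        ((2 : F)) • (hL b c (mul a z)) +
        ((3 : F)) • (hL (mul a z) c b) +
        ((-2 : F)) • (hL c z (mul b a)) +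
        ((-1 : F)) • (hL (mul b a) z c) +
        ((-4 : F)) • (hL (mul b c) a z) +
        ((-3 : F)) • (hL a z (mul b c)) +
        ((2 : F)) • (hL (mul b c) z a) +
        ((-1 : F)) • (hL (mul b z) a c) +
        ((-2 : F)) • (hL a c (mul b z)) +
        ((-2 : F)) • (hL (mul c a) b z) +
        ((3 : F)) • (hL (mul c a) z b) +
        ((2 : F)) • (hL (mul c b) a z) +
        ((1 : F)) • (hL a z (mul c b)) +
        ((1 : F)) • (hL (mul c z) a b) +
        ((4 : F)) • (hL a b (mul c z)) +
        ((1 : F)) • (hL (mul z a) b c) +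
        ((2 : F)) • (hL b c (mul z a)) +
        ((5 : F)) • (hL (mul z a) c b) +
        ((3 : F)) • (hL (mul z b) a c) +
        ((-1 : F)) • (hL a c (mul z b)) +
        ((2 : F)) • (hL (mul z b) c a) +
        ((-1 : F)) • (hL (mul z c) a b) +
        ((1 : F)) • (hL a b (mul z c)) +
        ((-4 : F)) • (hR c z (mul a b)) +
        ((2 : F)) • (hR (mul a z) b c) +
        ((2 : F)) • (hR b c (mul a z)) +
        ((-2 : F)) • (hR (mul b a) c z) +
        ((-2 : F)) • (hR c z (mul b a)) +
        ((-6 : F)) • (hR a z (mul b c)) +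
        ((-2 : F)) • (hR (mul b z) a c) +
        ((2 : F)) • (hR (mul c a) b z) +
        ((-2 : F)) • (hR b z (mul c a)) +
        ((2 : F)) • (hR a z (mul c b)) +
        ((2 : F)) • (hR (mul c z) a b) +
        ((2 : F)) • (hR a b (mul c z)) +
        ((4 : F)) • (hR (mul z a) b c) +
        ((4 : F)) • (hR b c (mul z a)) +
        ((4 : F)) • (hR a c (mul z b)) +
        ((-4 : F)) • (hLextL a b c z) +
        ((-2 : F)) • (hRextL a b c z) +
        ((-1 : F)) • (hLextL a b z c) +
        ((-5 : F)) • (hLextL a c z b) +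
        ((-2 : F)) • (hRextL a c z b) +
        ((-2 : F)) • (hLextL b a c z) +
        ((1 : F)) • (hRextL b a c z) +
        ((-1 : F)) • (hLextL b a z c) +
        ((-1 : F)) • (hRextL b a z c) +
        ((-2 : F)) • (hLextL b c z a) +
        ((1 : F)) • (hRextL b c z a) +
        ((-1 : F)) • (hRextL c a b z) +
        ((1 : F)) • (hLextL c a z b) +
        ((3 : F)) • (hRextL c a z b) +
        ((2 : F)) • (hLextL c b z a) +
        ((1 : F)) • (hRextL c b z a) +
        ((1 : F)) • (hLextL z a b c) +
        ((-2 : F)) • (hRextL z a b c) +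
        ((-1 : F)) • (hLextL z a c b) +
        ((2 : F)) • (hRextL z a c b) +
        ((-4 : F)) • (hLextR a b c z) +
        ((-2 : F)) • (hRextR a b c z) +
        ((-6 : F)) • (hLextR a b z c) +
        ((-4 : F)) • (hRextR a b z c) +
        ((-2 : F)) • (hLextR b a c z)
    have := congrArg (fun t => (2 : F)⁻¹ • t) key
    simpa [smul_smul, inv_mul_cancel₀ h2] using this
end

section
/- In a Jordan algebra J over a field F of characteristic ≠ 2, the commutator of two multiplication operators is a derivation: for all x, y ∈ J, the linear map d_{x,y} = L_x∘L_y − L_y∘L_x (i.e. d_{x,y}(z) = x(yz) − y(xz)) satisfies d_{x,y}(u·v) = d_{x,y}(u)·v + u·d_{x,y}(v) for all u, v ∈ J. -/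
/-- Doubled full linearization of the Jordan identity. -/
private lemma jordan_lin_aux {F J : Type*} [Field F] [AddCommGroup J] [Module F J]
    (mul : J →ₗ[F] J →ₗ[F] J)
    (jordan : ∀ x y : J, mul (mul x x) (mul y x) = mul (mul (mul x x) y) x)
    (a b c d : J) :
    mul (mul a b) (mul d c) + mul (mul b a) (mul d c)
      + mul (mul b c) (mul d a) + mul (mul c b) (mul d a)
      + mul (mul a c) (mul d b) + mul (mul c a) (mul d b)
    = mul (mul (mul a b) d) c + mul (mul (mul b a) d) c
      + mul (mul (mul b c) d) a + mul (mul (mul c b) d) a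
      + mul (mul (mul a c) d) b + mul (mul (mul c a) d) b := by
  have h1 := jordan (a + b + c) d
  have h2 := jordan (a + b) d
  have h3 := jordan (b + c) d
  have h4 := jordan (a + c) d
  have h5 := jordan a d
  have h6 := jordan b d
  have h7 := jordan c d
  simp only [map_add, LinearMap.add_apply] at h1 h2 h3 h4
  linear_combination (norm := abel) h1 - h2 - h3 - h4 + h5 + h6 + h7

/-- Full linearization of the Jordan identity. -/
private lemma jordan_lin {F J : Type*} [Field F] [AddCommGroup J] [Module F J]
    (hF : ringChar F ≠ 2)
    (mul : J →ₗ[F] J →ₗ[F] J)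
    (comm : ∀ x y : J, mul x y = mul y x)
    (jordan : ∀ x y : J, mul (mul x x) (mul y x) = mul (mul (mul x x) y) x)
    (a b c d : J) :
    mul (mul a b) (mul d c) + mul (mul b c) (mul d a) + mul (mul a c) (mul d b)
    = mul (mul (mul a b) d) c + mul (mul (mul b c) d) a + mul (mul (mul a c) d) b := by
  have h := jordan_lin_aux mul jordan a b c d
  rw [comm b a, comm c b, comm c a] at h
  have h2 : (2 : F) • (mul (mul a b) (mul d c) + mul (mul b c) (mul d a)
        + mul (mul a c) (mul d b))
      = (2 : F) • (mul (mul (mul a b) d) c + mul (mul (mul b c) d) a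
        + mul (mul (mul a c) d) b) := by
    rw [two_smul, two_smul]
    linear_combination (norm := abel) h
  exact smul_right_injective J (Ring.two_ne_zero hF) h2

/-- In a Jordan algebra over a field of characteristic `≠ 2`, the commutator of two
multiplication operators, `d_{x,y}(z) = x(yz) − y(xz)`, is a derivation. -/
theorem jordan_commutator_is_derivation {F J : Type*} [Field F]
    [AddCommGroup J] [Module F J]
    (hF : ringChar F ≠ 2)
    (mul : J →ₗ[F] J →ₗ[F] J)
    (comm : ∀ x y : J, mul x y = mul y x)
    (jordan : ∀ x y : J, mul (mul x x) (mul y x) = mul (mul (mul x x) y) x)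
    (x y u v : J) :
    mul x (mul y (mul u v)) - mul y (mul x (mul u v))
      = mul (mul x (mul y u) - mul y (mul x u)) v
        + mul u (mul x (mul y v) - mul y (mul x v)) := by
  have h1 := jordan_lin hF mul comm jordan v y u x
  have h2 := jordan_lin hF mul comm jordan v x u y
  -- normalize h1
  rw [comm v u] at h1
  rw [comm v y] at h1
  rw [comm (mul y v) (mul x u)] at h1
  rw [comm (mul y v) x] at h1
  rw [comm (mul x (mul y v)) u] at h1
  rw [comm (mul y u) x] at h1
  rw [comm x y] at h1
  rw [comm (mul u v) x] at h1
  rw [comm (mul x (mul u v)) y] at h1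
  -- normalize h2
  rw [comm v u] at h2
  rw [comm v x] at h2
  rw [comm (mul x v) (mul y u)] at h2
  rw [comm (mul x v) y] at h2
  rw [comm (mul y (mul x v)) u] at h2
  rw [comm (mul x u) y] at h2
  rw [comm (mul u v) y] at h2
  rw [comm (mul y (mul u v)) x] at h2
  simp only [map_sub, LinearMap.sub_apply]
  linear_combination (norm := abel) h1 - h2
end

section
/- For a Jordan algebra J over a field F of characteristic ≠ 2, the F-linear span of all operators L_x (x ∈ J) together with all commutators [L_x, L_y] = L_x∘L_y − L_y∘L_x (x, y ∈ J) is closed under the commutator bracket of endomorphisms of J; that is, the Lie multiplication algebra L(J) equals l_J + [l_J, l_J]. -/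
/-- Full linearization of the Jordan identity. -/
theorem jordan_linearized {F J : Type*} [Field F] [AddCommGroup J] [Module F J]
    (hF : ringChar F ≠ 2)
    (mul : J →ₗ[F] J →ₗ[F] J)
    (comm : ∀ x y : J, mul x y = mul y x)
    (jordan : ∀ x y : J, mul (mul x x) (mul y x) = mul (mul (mul x x) y) x)
    (u v w z : J) :
    mul (mul u v) (mul z w) + mul (mul u w) (mul z v) + mul (mul v w) (mul z u)
      = mul (mul (mul u v) z) w + mul (mul (mul u w) z) v + mul (mul (mul v w) z) u := by
  have j1 := jordan (u + v + w) z
  have j2 := jordan (u + v) z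
  have j3 := jordan (u + w) z
  have j4 := jordan (v + w) z
  have j5 := jordan u z
  have j6 := jordan v z
  have j7 := jordan w z
  simp only [map_add, LinearMap.add_apply, comm v u, comm w u, comm w v] at j1 j2 j3 j4
  have h2 : (mul (mul u v) (mul z w) + mul (mul u w) (mul z v) + mul (mul v w) (mul z u))
      + (mul (mul u v) (mul z w) + mul (mul u w) (mul z v) + mul (mul v w) (mul z u))
      = (mul (mul (mul u v) z) w + mul (mul (mul u w) z) v + mul (mul (mul v w) z) u)
      + (mul (mul (mul u v) z) w + mul (mul (mul u w) z) v + mul (mul (mul v w) z) u) := by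
    linear_combination (norm := abel) j1 - j2 - j3 - j4 + j5 + j6 + j7
  have h3 : (2:F) • (mul (mul u v) (mul z w) + mul (mul u w) (mul z v) + mul (mul v w) (mul z u))
      = (2:F) • (mul (mul (mul u v) z) w + mul (mul (mul u w) z) v + mul (mul (mul v w) z) u) := by
    rw [two_smul, two_smul]; exact h2
  exact smul_right_injective J (Ring.two_ne_zero hF) h3

theorem lmul_bracket_lmul {F J : Type*} [Field F] [AddCommGroup J] [Module F J]
    (hF : ringChar F ≠ 2)
    (mul : J →ₗ[F] J →ₗ[F] J)
    (comm : ∀ x y : J, mul x y = mul y x)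
    (jordan : ∀ x y : J, mul (mul x x) (mul y x) = mul (mul (mul x x) y) x)
    (a b x : J) :
    ⁅⁅(mul a : Module.End F J), (mul b : Module.End F J)⁆, (mul x : Module.End F J)⁆
      = (mul (mul a (mul b x) - mul b (mul a x)) : Module.End F J) := by
  ext w
  simp only [Ring.lie_def, LinearMap.sub_apply, Module.End.mul_apply, map_sub, LinearMap.sub_apply]
  have h1 := jordan_linearized hF mul comm jordan a x w b
  have h2 := jordan_linearized hF mul comm jordan b x w a
  simp only [comm (mul b w) (mul a x), comm (mul b x) (mul a w), comm b a,
    comm (mul a x) b, comm (mul a w) b, comm (mul b (mul a w)) x,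
    comm (mul x w) b, comm (mul b (mul x w)) a,
    comm (mul b x) a, comm (mul b w) a, comm (mul a (mul b w)) x,
    comm (mul x w) a, comm (mul a (mul x w)) b] at h1 h2
  linear_combination (norm := abel) h2 - h1

/-- The Lie multiplication algebra `L(J) = l_J + [l_J, l_J]` of a Jordan algebra is
closed under the commutator bracket of endomorphisms. -/
theorem lie_multiplication_algebra_closed_under_bracket {F J : Type*} [Field F]
    [AddCommGroup J] [Module F J]
    (hF : ringChar F ≠ 2)
    (mul : J →ₗ[F] J →ₗ[F] J)
    (comm : ∀ x y : J, mul x y = mul y x)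
    (jordan : ∀ x y : J, mul (mul x x) (mul y x) = mul (mul (mul x x) y) x)
    (S : Submodule F (Module.End F J))
    (hS : S = Submodule.span F
      (Set.range (fun x : J => (mul x : Module.End F J)) ∪
       Set.range (fun p : J × J => ⁅(mul p.1 : Module.End F J), (mul p.2 : Module.End F J)⁆)))
    (f g : Module.End F J) (hf : f ∈ S) (hg : g ∈ S) :
    ⁅f, g⁆ ∈ S := by
  subst hS
  letI : LieRing (Module.End F J) := LieRing.ofAssociativeRing
  set X : Set (Module.End F J) :=
    Set.range (fun x : J => (mul x : Module.End F J)) ∪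
      Set.range (fun p : J × J => ⁅(mul p.1 : Module.End F J), (mul p.2 : Module.End F J)⁆)
    with hX
  have hL : ∀ x : J, (mul x : Module.End F J) ∈ Submodule.span F X :=
    fun x => Submodule.subset_span (Or.inl ⟨x, rfl⟩)
  have hB : ∀ x y : J,
      ⁅(mul x : Module.End F J), (mul y : Module.End F J)⁆ ∈ Submodule.span F X :=
    fun x y => Submodule.subset_span (Or.inr ⟨(x, y), rfl⟩)
  have key : ∀ f ∈ Submodule.span F X, ∀ g ∈ Submodule.span F X,
      ⁅f, g⁆ ∈ Submodule.span F X := by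
    intro f hf
    induction hf using Submodule.span_induction with
    | mem f hfX =>
      intro g hg
      induction hg using Submodule.span_induction with
      | mem g hgX =>
        obtain ⟨x, rfl⟩ | ⟨p, rfl⟩ := hfX
        · obtain ⟨y, rfl⟩ | ⟨q, rfl⟩ := hgX
          · exact hB x y
          · rw [← lie_skew, lmul_bracket_lmul hF mul comm jordan q.1 q.2 x]
            exact neg_mem (hL _)
        · obtain ⟨y, rfl⟩ | ⟨q, rfl⟩ := hgX
          · rw [lmul_bracket_lmul hF mul comm jordan p.1 p.2 y]
            exact hL _
          · rw [leibniz_lie, lmul_bracket_lmul hF mul comm jordan p.1 p.2 q.1,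
              lmul_bracket_lmul hF mul comm jordan p.1 p.2 q.2]
            exact add_mem (hB _ _) (hB _ _)
      | zero => rw [lie_zero]; exact zero_mem _
      | add g1 g2 _ _ h1 h2 => rw [lie_add]; exact add_mem h1 h2
      | smul c g _ h => rw [lie_smul]; exact Submodule.smul_mem _ _ h
    | zero => intro g hg; rw [zero_lie]; exact zero_mem _
    | add f1 f2 _ _ h1 h2 => intro g hg; rw [add_lie]; exact add_mem (h1 g hg) (h2 g hg)
    | smul c f _ h => intro g hg; rw [smul_lie]; exact Submodule.smul_mem _ _ (h g hg)
  exact key f hf g hg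
end

section
/- If F is an algebraically closed field of characteristic ≠ 2 and C is a composition algebra over F of dimension 2, then C is isomorphic as a unital F-algebra to F × F. -/
namespace CompositionAlgebra
variable {F : Type*} [Field F] {C : Type*} [AddCommGroup C] [Module F C]
variable (A : CompositionAlgebra F C)

lemma polar_mul (x y z : C) :
    QuadraticMap.polar ⇑A.n (A.mul x y) (A.mul x z)
      = A.n x * QuadraticMap.polar ⇑A.n y z := by
  have h : A.mul x y + A.mul x z = A.mul x (y + z) := (map_add _ _ _).symm
  simp only [QuadraticMap.polar, h, A.norm_mul]
  ring

lemma polar_exchange (x y w z : C) :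
    QuadraticMap.polar ⇑A.n (A.mul x y) (A.mul w z)
      + QuadraticMap.polar ⇑A.n (A.mul w y) (A.mul x z)
      = QuadraticMap.polar ⇑A.n x w * QuadraticMap.polar ⇑A.n y z := by
  have h := A.polar_mul (x + w) y z
  have hm1 : A.mul (x + w) y = A.mul x y + A.mul w y := by
    rw [map_add]; rfl
  have hm2 : A.mul (x + w) z = A.mul x z + A.mul w z := by
    rw [map_add]; rfl
  have hn : A.n (x + w) = A.n x + A.n w + QuadraticMap.polar ⇑A.n x w := by
    simp [QuadraticMap.polar]
  rw [hm1, hm2, hn, QuadraticMap.polar_add_left, QuadraticMap.polar_add_right,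
    QuadraticMap.polar_add_right, A.polar_mul x y z, A.polar_mul w y z] at h
  linear_combination h

/-- Cayley–Hamilton identity `x² = t(x)·x − n(x)·1`. -/
lemma mul_self_eq (x : C) :
    A.mul x x = QuadraticMap.polar ⇑A.n x A.one • x - A.n x • A.one := by
  have key : ∀ z : C, QuadraticMap.polar ⇑A.n
      (A.mul x x - (QuadraticMap.polar ⇑A.n x A.one • x - A.n x • A.one)) z = 0 := by
    intro z
    have h1 := A.polar_exchange x x A.one z
    rw [A.one_mul x, A.one_mul z] at h1
    have h2 : QuadraticMap.polar ⇑A.n (A.mul x A.one) (A.mul x z)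
        = A.n x * QuadraticMap.polar ⇑A.n A.one z := A.polar_mul x A.one z
    rw [A.mul_one x] at h2
    rw [QuadraticMap.polar_sub_left, QuadraticMap.polar_sub_left,
      QuadraticMap.polar_smul_left, QuadraticMap.polar_smul_left, smul_eq_mul, smul_eq_mul]
    linear_combination h1 - h2
  exact sub_eq_zero.mp (A.nondeg _ key)

end CompositionAlgebra


/-- Over an algebraically closed field of characteristic `≠ 2`, a two-dimensional
composition algebra is isomorphic, as a unital algebra, to `F × F`. -/
theorem dim_two_composition_algebra_iso {F : Type*} [Field F] [IsAlgClosed F] {C : Type*}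
    [AddCommGroup C] [Module F C] [FiniteDimensional F C]
    (hF : ringChar F ≠ 2) (A : CompositionAlgebra F C)
    (hdim : Module.finrank F C = 2) :
    ∃ e : C ≃ₗ[F] F × F, (∀ x y : C, e (A.mul x y) = e x * e y) ∧ e A.one = 1 := by
  classical
  have h2 : (2 : F) ≠ 0 := Ring.two_ne_zero hF
  have hCnt : Nontrivial C :=
    Module.nontrivial_of_finrank_pos (R := F) (by rw [hdim]; norm_num)
  have hone : A.one ≠ 0 := by
    intro h
    obtain ⟨x, hx⟩ := exists_ne (0 : C)
    apply hx
    have hx1 := A.one_mul x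
    rw [h] at hx1
    simpa using hx1.symm
  have hn1 : A.n A.one = 1 := by
    have h11 : A.n A.one = A.n A.one * A.n A.one := by
      conv_lhs => rw [← A.one_mul A.one]
      exact A.norm_mul _ _
    have hne : A.n A.one ≠ 0 := by
      intro h0
      apply hone
      apply A.nondeg
      intro y
      have hx : ∀ x : C, A.n x = 0 := fun x => by
        have h := A.norm_mul x A.one
        rw [A.mul_one, h0, mul_zero] at h
        exact h
      simp [QuadraticMap.polar, hx]
    exact (mul_left_cancel₀ hne (by rw [mul_one]; exact h11)).symm
  obtain ⟨v, hv⟩ : ∃ v : C, v ∉ Submodule.span F {A.one} := by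
    by_contra h
    push_neg at h
    have htop : Submodule.span F {A.one} = ⊤ := eq_top_iff.mpr fun x _ => h x
    have h1 : Module.finrank F (Submodule.span F {A.one}) = 1 :=
      finrank_span_singleton hone
    rw [htop, finrank_top, hdim] at h1
    omega
  have hli : LinearIndependent F ![v, A.one] := by
    rw [linearIndependent_fin2]
    refine ⟨hone, fun a ha => hv ?_⟩
    simp only [Matrix.cons_val_one, Matrix.head_cons, Matrix.cons_val_zero] at ha
    rw [← ha]
    exact Submodule.smul_mem _ a (Submodule.mem_span_singleton_self _)
  let B := basisOfLinearIndependentOfCardEqFinrank hli (by rw [hdim]; simp)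
  have hB : ⇑B = ![v, A.one] := coe_basisOfLinearIndependentOfCardEqFinrank hli _
  have hB0 : B 0 = v := by rw [hB]; rfl
  have hB1 : B 1 = A.one := by rw [hB]; rfl
  set T : F := QuadraticMap.polar ⇑A.n v A.one with hT
  set N : F := A.n v with hN
  have hrep : ∀ y : C, y = B.repr y 0 • v + B.repr y 1 • A.one := by
    intro y
    have h := B.sum_repr y
    rw [Fin.sum_univ_two, hB0, hB1] at h
    exact h.symm
  have p11 : QuadraticMap.polar ⇑A.n A.one A.one = 2 := by
    rw [QuadraticMap.polar_self, hn1]; norm_num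
  have pvv : QuadraticMap.polar ⇑A.n v v = 2 * N := by
    rw [QuadraticMap.polar_self, nsmul_eq_mul, hN]; norm_num
  have p1v : QuadraticMap.polar ⇑A.n A.one v = T := QuadraticMap.polar_comm _ _ _
  have hdisc : T ^ 2 - 4 * N ≠ 0 := by
    intro h0
    apply hv
    have hw : v - (T / 2) • A.one = 0 := by
      apply A.nondeg
      intro y
      rw [hrep y, QuadraticMap.polar_add_right, QuadraticMap.polar_smul_right,
        QuadraticMap.polar_smul_right, QuadraticMap.polar_sub_left,
        QuadraticMap.polar_sub_left, QuadraticMap.polar_smul_left,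
        QuadraticMap.polar_smul_left, pvv, p1v, p11, ← hT]
      simp only [smul_eq_mul]
      field_simp
      ring_nf
      linear_combination (-(B.repr y 0)) * h0
    have : v = (T / 2) • A.one := by
      rw [sub_eq_zero] at hw; exact hw
    rw [this]
    exact Submodule.smul_mem _ _ (Submodule.mem_span_singleton_self _)
  obtain ⟨δ, hδ⟩ := IsAlgClosed.exists_pow_nat_eq (T ^ 2 - 4 * N) (n := 2) (by norm_num)
  have hδ0 : δ ≠ 0 := by
    intro h
    rw [h] at hδ
    simp at hδ
    exact hdisc hδ.symm
  obtain ⟨α, β, hαβ', hα2, hβ2⟩ :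
      ∃ α β : F, α - β ≠ 0 ∧ α * α = T * α - N ∧ β * β = T * β - N := by
    refine ⟨(T + δ) / 2, (T - δ) / 2, ?_, ?_, ?_⟩
    · intro h
      apply hδ0
      field_simp at h
      have h3 : (2 : F) * δ = 0 := by linear_combination h
      exact (mul_eq_zero.mp h3).resolve_left h2
    · field_simp
      linear_combination hδ
    · field_simp
      linear_combination hδ
  have hαβ : α - β ≠ 0 := hαβ'
  let f : C →ₗ[F] F × F :=
    LinearMap.prod (B.coord 1 + α • B.coord 0) (B.coord 1 + β • B.coord 0)
  have hf : ∀ x : C, f x = (B.repr x 1 + α * B.repr x 0, B.repr x 1 + β * B.repr x 0) := by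
    intro x
    simp [f, LinearMap.prod_apply, Module.Basis.coord_apply]
  have hinj : Function.Injective f := by
    rw [← LinearMap.ker_eq_bot, LinearMap.ker_eq_bot']
    intro m hm
    rw [hf] at hm
    have h1 : B.repr m 1 + α * B.repr m 0 = 0 := congrArg Prod.fst hm
    have h2 : B.repr m 1 + β * B.repr m 0 = 0 := congrArg Prod.snd hm
    have h0 : B.repr m 0 = 0 := by
      have h3 : (α - β) * B.repr m 0 = 0 := by linear_combination h1 - h2
      exact (mul_eq_zero.mp h3).resolve_left hαβ
    have h4 : B.repr m 1 = 0 := by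
      rw [h0, mul_zero, add_zero] at h1; exact h1
    rw [hrep m, h0, h4]
    simp
  have hfr : Module.finrank F C = Module.finrank F (F × F) := by
    rw [hdim]; simp
  refine ⟨f.linearEquivOfInjective hinj hfr, ?_, ?_⟩
  · intro x y
    simp only [LinearMap.linearEquivOfInjective_apply]
    have hvv := A.mul_self_eq v
    rw [← hT, ← hN] at hvv
    have hmulCH : ∀ a b c d : F,
        A.mul (a • v + b • A.one) (c • v + d • A.one)
          = (a * c * T + a * d + b * c) • v + (b * d - a * c * N) • A.one := by
      intro a b c d
      simp only [map_add, map_smul, LinearMap.add_apply, LinearMap.smul_apply,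
        A.one_mul, A.mul_one, hvv]
      module
    have he : ∀ a b : F, f (a • v + b • A.one) = (b + α * a, b + β * a) := by
      intro a b
      rw [hf]
      have hrv : B.repr v = Finsupp.single 0 1 := by rw [← hB0]; exact B.repr_self 0
      have hro : B.repr A.one = Finsupp.single 1 1 := by rw [← hB1]; exact B.repr_self 1
      simp [hrv, hro, Finsupp.single_apply]
    rw [hrep x, hrep y, hmulCH, he, he, he]
    rw [Prod.mk_mul_mk, Prod.mk.injEq]
    constructor
    · linear_combination (-(B.repr x 0 * B.repr y 0)) * hα2
    · linear_combination (-(B.repr x 0 * B.repr y 0)) * hβ2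
  · simp only [LinearMap.linearEquivOfInjective_apply]
    rw [hf]
    have hro : B.repr A.one = Finsupp.single 1 1 := by rw [← hB1]; exact B.repr_self 1
    simp [hro]
end

section
/- If F is an algebraically closed field of characteristic ≠ 2, 3 and C is a composition algebra over F, then every derivation of C is inner: any linear map d : C → C with d(x·y) = d(x)·y + x·d(y) for all x, y ∈ C belongs to the F-linear span of the maps D_{a,b} : c ↦ [[a,b],c] + 3(a,c,b) for a, b ∈ C, where [a,b] = ab − ba and (a,c,b) = (ac)b − a(cb). -/
/-- The inner derivation `D_{a,b} : c ↦ [[a,b],c] + 3(a,c,b)` as a linear map,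
where `[a,b] = ab − ba` and `(a,c,b) = (ac)b − a(cb)`. -/
def CompositionAlgebra.innerDer {F : Type*} [Field F] {C : Type*}
    [AddCommGroup C] [Module F C] (A : CompositionAlgebra F C) (a b : C) : C →ₗ[F] C :=
  (A.mul (A.mul a b - A.mul b a) - A.mul.flip (A.mul a b - A.mul b a))
    + (3 : F) • ((A.mul.flip b) ∘ₗ (A.mul a) - (A.mul a) ∘ₗ (A.mul.flip b))

set_option linter.unusedSectionVars false

namespace DerInner
open Finset

variable {F : Type*} [Field F] {C : Type*} [AddCommGroup C] [Module F C]

variable (A : CompositionAlgebra F C)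


/-- The polar bilinear form as a bilinear map. -/
noncomputable def bb : LinearMap.BilinForm F C := A.n.polarBilin

lemma bb_apply (x y : C) : bb A x y = A.b x y := by
  simp [bb, CompositionAlgebra.b, QuadraticMap.polarBilin_apply_apply]

lemma bb_comm (x y : C) : bb A x y = bb A y x := by
  rw [bb_apply, bb_apply]; exact QuadraticMap.polar_comm _ _ _

lemma bb_self (x : C) : bb A x x = 2 * A.n x := by
  rw [bb_apply]
  show QuadraticMap.polar ⇑A.n x x = 2 * A.n x
  rw [QuadraticMap.polar_self]
  push_cast [nsmul_eq_mul]
  ring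

lemma bb_nondeg : (bb A).Nondegenerate := by
  refine ⟨fun x hx => ?_, fun x hx => ?_⟩
  · exact A.nondeg x fun y => by simpa [bb_apply, CompositionAlgebra.b] using hx y
  · exact A.nondeg x fun y => by
      have h := hx y
      rw [bb_comm] at h
      simpa [bb_apply, CompositionAlgebra.b] using h

lemma eq_of_bb_eq {x y : C} (h : ∀ z, bb A x z = bb A y z) : x = y := by
  have h0 : x - y = 0 :=
    (bb_nondeg A).1 (x - y) (fun z => by
      rw [map_sub, LinearMap.sub_apply, h z, sub_self])
  exact sub_eq_zero.mp h0

lemma t_def (x : C) : A.t x = bb A x A.one := (bb_apply A x A.one).symm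

lemma polar_eq (x y : C) : A.b x y = A.n (x + y) - A.n x - A.n y := rfl

lemma n_one (h0 : A.one ≠ 0) : A.n A.one = 1 := by
  have h := A.norm_mul A.one A.one
  rw [A.one_mul] at h
  have h' : A.n A.one * (A.n A.one - 1) = 0 := by rw [mul_sub, ← h]; ring
  rcases mul_eq_zero.mp h' with h1 | h1
  · exfalso
    apply h0
    apply A.nondeg
    intro y
    have hn : ∀ z : C, A.n z = 0 := by
      intro z
      have := A.norm_mul A.one z
      rwa [A.one_mul, h1, zero_mul] at this
    show QuadraticMap.polar ⇑A.n A.one y = 0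
    simp [QuadraticMap.polar, hn]
  · exact sub_eq_zero.mp h1

lemma t_one (h0 : A.one ≠ 0) : A.t A.one = 2 := by
  rw [t_def, bb_self, n_one A h0, mul_one]

lemma mul_add_left (x y z : C) : A.mul (x + y) z = A.mul x z + A.mul y z := by
  rw [map_add]; rfl

lemma comp_right (x y z : C) : bb A (A.mul x z) (A.mul y z) = bb A x y * A.n z := by
  rw [bb_apply, bb_apply, polar_eq, polar_eq, ← mul_add_left, A.norm_mul, A.norm_mul,
    A.norm_mul]
  ring

lemma comp_left (x y z : C) : bb A (A.mul x y) (A.mul x z) = A.n x * bb A y z := by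
  rw [bb_apply, bb_apply, polar_eq, polar_eq, ← map_add, A.norm_mul, A.norm_mul,
    A.norm_mul]
  ring

/-- Full linearization, shared left factors:
`b(xy, wz) + b(wy, xz) = b(x,w) b(y,z)`. -/
lemma cross (x y w z : C) :
    bb A (A.mul x y) (A.mul w z) + bb A (A.mul w y) (A.mul x z)
      = bb A x w * bb A y z := by
  have key := comp_left A (x + w) y z
  simp only [mul_add_left, map_add, LinearMap.add_apply] at key
  have hn : A.n (x + w) = A.n x + A.n w + bb A x w := by
    rw [bb_apply, polar_eq]; ring
  rw [hn] at key
  have h2 := comp_left A x y z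
  have h3 := comp_left A w y z
  linear_combination key - h2 - h3

/-- `b(xy,z) = t(x) b(y,z) - b(y, xz)` -/
lemma I1 (x y z : C) :
    bb A (A.mul x y) z = A.t x * bb A y z - bb A y (A.mul x z) := by
  have h := cross A x y A.one z
  rw [A.one_mul, A.one_mul] at h
  linear_combination h - bb A y z * (t_def A x)

/-- `b(xy,z) = t(y) b(x,z) - b(x, zy)` -/
lemma I2 (x y z : C) :
    bb A (A.mul x y) z = A.t y * bb A x z - bb A x (A.mul z y) := by
  have h := cross A x y z A.one
  rw [A.mul_one, A.mul_one] at h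
  linear_combination h - (bb_comm A (A.mul z y) x) - bb A x z * (t_def A y)

/-- `b(x, yw) + b(y, xw) = b(x,y) t(w)` -/
lemma dagger (x y w : C) :
    bb A x (A.mul y w) + bb A y (A.mul x w) = bb A x y * A.t w := by
  have h := cross A x A.one y w
  rw [A.mul_one, A.mul_one] at h
  have h1 : bb A A.one w = A.t w := by rw [bb_comm, t_def]
  linear_combination h + bb A x y * h1

/-- Linearized left composition law (as elements). -/
lemma LK3lin (x y z : C) :
    A.mul x (A.mul y z) + A.mul y (A.mul x z)
      = A.t x • A.mul y z + A.t y • A.mul x z - bb A x y • z := by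
  refine eq_of_bb_eq A fun w => ?_
  simp only [map_add, map_sub, map_smul, LinearMap.add_apply, LinearMap.sub_apply,
    LinearMap.smul_apply, smul_eq_mul]
  linear_combination (I1 A x (A.mul y z) w) + (I1 A y (A.mul x z) w)
    - (cross A y z x w) + bb A z w * (bb_comm A x y)

/-- Linearized right composition law (as elements). -/
lemma RK3lin (x y z : C) :
    A.mul (A.mul x y) z + A.mul (A.mul x z) y
      = A.t z • A.mul x y + A.t y • A.mul x z - bb A y z • x := by
  refine eq_of_bb_eq A fun w => ?_
  simp only [map_add, map_sub, map_smul, LinearMap.add_apply, LinearMap.sub_apply,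
    LinearMap.smul_apply, smul_eq_mul]
  linear_combination (I2 A (A.mul x y) z w) + (I2 A (A.mul x z) y w)
    - (cross A x y w z) - (bb_comm A (A.mul x z) (A.mul w y))

/-- Anti-commutation relation. -/
lemma ACOM (x y : C) :
    A.mul x y + A.mul y x = A.t x • y + A.t y • x - bb A x y • A.one := by
  refine eq_of_bb_eq A fun w => ?_
  simp only [map_add, map_sub, map_smul, LinearMap.add_apply, LinearMap.sub_apply,
    LinearMap.smul_apply, smul_eq_mul]
  have h1 : bb A A.one w = A.t w := by rw [bb_comm, t_def]
  linear_combination (I1 A x y w) + (I1 A y x w) - (dagger A x y w)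
    + bb A x y * h1

/-- Cayley–Hamilton. -/
lemma CH (h2 : (2:F) ≠ 0) (x : C) :
    A.mul x x = A.t x • x - A.n x • A.one := by
  have h := ACOM A x x
  rw [bb_self] at h
  apply smul_right_injective C h2
  show (2:F) • A.mul x x = (2:F) • (A.t x • x - A.n x • A.one)
  rw [two_smul, h]
  module

lemma t_mul (x y : C) :
    A.t (A.mul x y) = A.t x * A.t y - bb A x y := by
  have h := I1 A x y A.one
  rw [A.mul_one] at h
  rw [t_def, h, ← t_def, bb_comm A y x]

section Der

variable (h0 : A.one ≠ 0) (h2 : (2:F) ≠ 0)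
variable (d : C →ₗ[F] C)
variable (hd : ∀ x y : C, d (A.mul x y) = A.mul (d x) y + A.mul x (d y))

include hd

lemma d_one : d A.one = 0 := by
  have h := hd A.one A.one
  simp only [A.one_mul, A.mul_one] at h
  exact (add_eq_left.mp h.symm)

include h2 in
lemma d_star (x : C) : A.t (d x) • x = bb A (d x) x • A.one := by
  have h := hd x x
  rw [CH A h2 x, map_sub, map_smul, map_smul, d_one A d hd, smul_zero, sub_zero,
    ACOM A (d x) x] at h
  linear_combination (norm := module) -h

include h2 in
lemma t_d (x : C) : A.t (d x) = 0 := by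
  by_contra htx
  have hx : x = ((A.t (d x))⁻¹ * bb A (d x) x) • A.one := by
    rw [mul_smul, ← d_star A h2 d hd x, ← mul_smul, inv_mul_cancel₀ htx, one_smul]
  have hdx : d x = 0 := by
    rw [hx, map_smul, d_one A d hd, smul_zero]
  apply htx
  rw [hdx, t_def, map_zero, LinearMap.zero_apply]

include h0 h2 in
lemma bdxx (x : C) : bb A (d x) x = 0 := by
  have h := d_star A h2 d hd x
  rw [t_d A h2 d hd x, zero_smul] at h
  rcases smul_eq_zero.mp h.symm with h' | h'
  · exact h'
  · exact absurd h' h0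

include h0 h2 in
lemma d_skew (x y : C) : bb A (d x) y = - bb A x (d y) := by
  have h := bdxx A h0 h2 d hd (x + y)
  simp only [map_add, LinearMap.add_apply] at h
  linear_combination h - bdxx A h0 h2 d hd x - bdxx A h0 h2 d hd y
    + (bb_comm A x (d y))

end Der

section SkewBasic

variable (g : C →ₗ[F] C)
variable (hg1 : g A.one = 0)
variable (hgsk : ∀ x y : C, bb A (g x) y = - bb A x (g y))

include hg1 hgsk

lemma t_g (x : C) : A.t (g x) = 0 := by
  rw [t_def, hgsk x A.one, hg1, map_zero, neg_zero]

end SkewBasic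


lemma mul_sum_left {κ : Type*} (s : Finset κ) (w : κ → C) (c : C) :
    A.mul (∑ i ∈ s, w i) c = ∑ i ∈ s, A.mul (w i) c := by
  rw [map_sum, LinearMap.sum_apply]

lemma mul_smul_left (a : F) (x y : C) : A.mul (a • x) y = a • A.mul x y := by
  rw [map_smul, LinearMap.smul_apply]

lemma bb_sum_left {κ : Type*} (s : Finset κ) (w : κ → C) (z : C) :
    bb A (∑ i ∈ s, w i) z = ∑ i ∈ s, bb A (w i) z := by
  rw [map_sum, LinearMap.sum_apply]

lemma bb_smul_left (a : F) (x z : C) : bb A (a • x) z = a * bb A x z := by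
  rw [map_smul, LinearMap.smul_apply, smul_eq_mul]


lemma innerDer_apply (a b c : C) :
    A.innerDer a b c = A.mul (A.mul a b) c - A.mul (A.mul b a) c
      - A.mul c (A.mul a b) + A.mul c (A.mul b a)
      + (3:F) • (A.mul (A.mul a c) b - A.mul a (A.mul c b)) := by
  simp only [CompositionAlgebra.innerDer, LinearMap.add_apply, LinearMap.sub_apply,
    LinearMap.smul_apply, LinearMap.comp_apply, LinearMap.flip_apply, map_sub]
  module


lemma asso12 (x y z : C) :
    A.mul (A.mul x y) z - A.mul x (A.mul y z)
      = -(A.mul (A.mul y x) z - A.mul y (A.mul x z)) := by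
  have h1 := LK3lin A x y z
  have h2 := congrArg (fun w => A.mul w z) (ACOM A x y)
  simp only [map_add, map_sub, map_smul, LinearMap.add_apply, LinearMap.sub_apply,
    LinearMap.smul_apply, A.one_mul] at h2
  linear_combination (norm := module) h2 - h1

lemma asso23 (x y z : C) :
    A.mul (A.mul x y) z - A.mul x (A.mul y z)
      = -(A.mul (A.mul x z) y - A.mul x (A.mul z y)) := by
  have h1 := RK3lin A x y z
  have h2 := congrArg (A.mul x) (ACOM A y z)
  simp only [map_add, map_sub, map_smul, A.mul_one] at h2
  linear_combination (norm := module) h1 - h2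

lemma asso_cyc (x y z : C) :
    A.mul (A.mul x y) z - A.mul x (A.mul y z)
      = A.mul (A.mul y z) x - A.mul y (A.mul z x) := by
  have h1 := asso12 A x y z
  have h2 := asso23 A y x z
  linear_combination (norm := module) h1 - h2


lemma ad_one (u : C) : (A.mul u - A.mul.flip u) A.one = 0 := by
  rw [LinearMap.sub_apply, LinearMap.flip_apply, A.mul_one, A.one_mul, sub_self]

lemma ad_skew (u : C) (htu : A.t u = 0) (x y : C) :
    bb A ((A.mul u - A.mul.flip u) x) y = - bb A x ((A.mul u - A.mul.flip u) y) := by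
  simp only [LinearMap.sub_apply, LinearMap.flip_apply, map_sub]
  have h1 := I1 A u x y
  have h2 := I2 A x u y
  rw [htu] at h1 h2
  linear_combination h1 - h2

section Contr

variable {ι : Type*} [Fintype ι] (e f : ι → C)
variable (hE1 : ∀ x : C, ∑ i, bb A x (f i) • e i = x)
variable (hE2 : ∀ x : C, ∑ i, bb A x (e i) • f i = x)

include hE1 hE2

/-- Master swap lemma. -/
lemma MS {V : Type*} [AddCommGroup V] [Module F V] (m : C →ₗ[F] C →ₗ[F] V) :
    ∑ i, m (e i) (f i) = ∑ i, m (f i) (e i) := by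
  have step1 : ∀ i, m (e i) (f i) = ∑ j, bb A (e i) (e j) • m (f j) (f i) := by
    intro i
    conv_lhs => rw [← hE2 (e i)]
    rw [map_sum, LinearMap.sum_apply]
    exact Finset.sum_congr rfl fun j _ => by rw [map_smul, LinearMap.smul_apply]
  have step2 : ∀ j, m (f j) (e j) = ∑ i, bb A (e j) (e i) • m (f j) (f i) := by
    intro j
    conv_lhs => rw [← hE2 (e j)]
    rw [map_sum]
    exact Finset.sum_congr rfl fun i _ => by rw [map_smul]
  calc ∑ i, m (e i) (f i) = ∑ i, ∑ j, bb A (e i) (e j) • m (f j) (f i) :=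
        Finset.sum_congr rfl fun i _ => step1 i
    _ = ∑ j, ∑ i, bb A (e i) (e j) • m (f j) (f i) := Finset.sum_comm
    _ = ∑ j, ∑ i, bb A (e j) (e i) • m (f j) (f i) := by
        exact Finset.sum_congr rfl fun j _ => Finset.sum_congr rfl fun i _ => by
          rw [bb_comm A (e i) (e j)]
    _ = ∑ j, m (f j) (e j) := Finset.sum_congr rfl fun j _ => (step2 j).symm

/-- Adjoint swap lemma. -/
lemma AS {V : Type*} [AddCommGroup V] [Module F V] (m : C →ₗ[F] C →ₗ[F] V)
    (h h' : C →ₗ[F] C) (hadj : ∀ x y, bb A (h x) y = bb A x (h' y)) :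
    ∑ i, m (e i) (h (f i)) = ∑ i, m (h' (e i)) (f i) := by
  have expand : ∀ i, h (f i) = ∑ j, bb A (f i) (h' (e j)) • f j := by
    intro i
    conv_lhs => rw [← hE2 (h (f i))]
    exact Finset.sum_congr rfl fun j _ => by rw [hadj]
  calc ∑ i, m (e i) (h (f i))
      = ∑ i, ∑ j, bb A (f i) (h' (e j)) • m (e i) (f j) := by
        refine Finset.sum_congr rfl fun i _ => ?_
        rw [expand i, map_sum]
        exact Finset.sum_congr rfl fun j _ => by rw [map_smul]
    _ = ∑ j, ∑ i, bb A (h' (e j)) (f i) • m (e i) (f j) := by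
        rw [Finset.sum_comm]
        exact Finset.sum_congr rfl fun j _ => Finset.sum_congr rfl fun i _ => by
          rw [bb_comm A (f i) (h' (e j))]
    _ = ∑ j, m (h' (e j)) (f j) := by
        refine Finset.sum_congr rfl fun j _ => ?_
        have key : m (h' (e j)) (f j) = ∑ i, bb A (h' (e j)) (f i) • m (e i) (f j) := by
          conv_lhs => rw [← hE1 (h' (e j))]
          rw [map_sum, LinearMap.sum_apply]
          exact Finset.sum_congr rfl fun i _ => by rw [map_smul, LinearMap.smul_apply]
        exact key.symm

lemma sumT1 : ∑ i, A.t (f i) • e i = A.one := by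
  have h : ∀ i : ι, A.t (f i) • e i = bb A A.one (f i) • e i := by
    intro i; rw [t_def, bb_comm A A.one (f i)]
  rw [Finset.sum_congr rfl fun i _ => h i, hE1 A.one]

lemma sumT2 : ∑ i, A.t (e i) • f i = A.one := by
  have h : ∀ i : ι, A.t (e i) • f i = bb A A.one (e i) • f i := by
    intro i; rw [t_def, bb_comm A A.one (e i)]
  rw [Finset.sum_congr rfl fun i _ => h i, hE2 A.one]

lemma s_eq (h2' : (2:F) ≠ 0) (ν : F) (hν : (2:F) * ν = 2 - ∑ i, bb A (e i) (f i)) :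
    ∑ i, A.mul (e i) (f i) = ν • A.one := by
  refine eq_of_bb_eq A fun z => ?_
  have hbz : bb A A.one z = A.t z := by rw [bb_comm, t_def]
  have hMS := MS A e f hE1 hE2 ((bb A).compl₂ (A.mul.flip z))
  simp only [LinearMap.compl₂_apply, LinearMap.flip_apply] at hMS
  -- hMS : ∑ i, bb (e i) (M (f i) z) = ∑ i, bb (f i) (M (e i) z)
  have hT : (2:F) * (∑ i, bb A (f i) (A.mul (e i) z))
      = (∑ i, bb A (e i) (f i)) * A.t z := by
    have hstep : ∀ i : ι, bb A (f i) (A.mul (e i) z)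
        = A.t z * bb A (e i) (f i) - bb A (e i) (A.mul (f i) z) := by
      intro i
      have h := I2 A (e i) z (f i)
      linear_combination h + bb_comm A (f i) (A.mul (e i) z)
    have hexp := Finset.sum_congr rfl fun i (_ : i ∈ Finset.univ) => hstep i
    rw [Finset.sum_sub_distrib, ← Finset.mul_sum] at hexp
    linear_combination hexp - hMS
  have hL : bb A (∑ i, A.mul (e i) (f i)) z
      = A.t z - ∑ i, bb A (f i) (A.mul (e i) z) := by
    rw [bb_sum_left]
    have hstep : ∀ i : ι, bb A (A.mul (e i) (f i)) z
        = A.t (e i) * bb A (f i) z - bb A (f i) (A.mul (e i) z) :=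
      fun i => I1 A (e i) (f i) z
    rw [Finset.sum_congr rfl fun i _ => hstep i, Finset.sum_sub_distrib]
    congr 1
    have hpack : ∀ i : ι, A.t (e i) * bb A (f i) z = bb A (A.t (e i) • f i) z :=
      fun i => (bb_smul_left A _ _ _).symm
    rw [Finset.sum_congr rfl fun i _ => hpack i, ← bb_sum_left, sumT2 A e f hE1 hE2, hbz]
  rw [hL, bb_smul_left, hbz]
  apply mul_left_cancel₀ h2'
  linear_combination -hT - A.t z * hν

lemma X2 (h2' : (2:F) ≠ 0) (ν : F) (hν : (2:F) * ν = 2 - ∑ i, bb A (e i) (f i)) (c : C) :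
    ∑ i, A.mul (e i) (A.mul (f i) c) = ν • c := by
  have hMS := MS A e f hE1 hE2 (A.mul.compl₂ (A.mul.flip c))
  simp only [LinearMap.compl₂_apply, LinearMap.flip_apply] at hMS
  -- hMS : ∑ i, M (e i) (M (f i) c) = ∑ i, M (f i) (M (e i) c)
  have hstep : ∀ i : ι, A.mul (e i) (A.mul (f i) c)
      = A.t (e i) • A.mul (f i) c + A.t (f i) • A.mul (e i) c
        - bb A (e i) (f i) • c - A.mul (f i) (A.mul (e i) c) := by
    intro i
    have h := LK3lin A (e i) (f i) c
    linear_combination (norm := module) h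
  have hsum := Finset.sum_congr rfl fun i (_ : i ∈ Finset.univ) => hstep i
  rw [Finset.sum_sub_distrib, Finset.sum_sub_distrib, Finset.sum_add_distrib] at hsum
  have e1 : ∑ i, A.t (e i) • A.mul (f i) c = c := by
    have hp : ∀ i : ι, A.t (e i) • A.mul (f i) c = A.mul (A.t (e i) • f i) c :=
      fun i => (mul_smul_left A _ _ _).symm
    rw [Finset.sum_congr rfl fun i _ => hp i, ← mul_sum_left, sumT2 A e f hE1 hE2, A.one_mul]
  have e2 : ∑ i, A.t (f i) • A.mul (e i) c = c := by
    have hp : ∀ i : ι, A.t (f i) • A.mul (e i) c = A.mul (A.t (f i) • e i) c :=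
      fun i => (mul_smul_left A _ _ _).symm
    rw [Finset.sum_congr rfl fun i _ => hp i, ← mul_sum_left, sumT1 A e f hE1 hE2, A.one_mul]
  have e3 : ∑ i, bb A (e i) (f i) • c = (∑ i, bb A (e i) (f i)) • c :=
    (Finset.sum_smul).symm
  rw [e1, e2, e3, ← hMS] at hsum
  -- hsum : S = c + c - NN • c - S
  apply smul_right_injective C h2'
  show (2:F) • (∑ i, A.mul (e i) (A.mul (f i) c)) = (2:F) • (ν • c)
  rw [smul_smul, hν]
  linear_combination (norm := module) hsum

lemma Jlem (h2' : (2:F) ≠ 0) (ν : F) (hν : (2:F) * ν = 2 - ∑ i, bb A (e i) (f i)) (a : C) :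
    ∑ i, A.mul (e i) (A.mul a (f i)) = ν • (A.t a • A.one - a) := by
  have hs := s_eq A e f hE1 hE2 h2' ν hν
  have hstep : ∀ i : ι, A.mul (e i) (A.mul a (f i))
      = A.t (e i) • A.mul a (f i) + A.t a • A.mul (e i) (f i)
        - bb A (e i) a • f i - A.mul a (A.mul (e i) (f i)) := by
    intro i
    have h := LK3lin A (e i) a (f i)
    linear_combination (norm := module) h
  have hsum := Finset.sum_congr rfl fun i (_ : i ∈ Finset.univ) => hstep i
  rw [Finset.sum_sub_distrib, Finset.sum_sub_distrib, Finset.sum_add_distrib] at hsum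
  have e1 : ∑ i, A.t (e i) • A.mul a (f i) = a := by
    have hp : ∀ i : ι, A.t (e i) • A.mul a (f i) = A.mul a (A.t (e i) • f i) :=
      fun i => (map_smul (A.mul a) _ _).symm
    rw [Finset.sum_congr rfl fun i _ => hp i, ← map_sum, sumT2 A e f hE1 hE2, A.mul_one]
  have e2 : ∑ i, A.t a • A.mul (e i) (f i) = A.t a • (ν • A.one) := by
    rw [← Finset.smul_sum, hs]
  have e3 : ∑ i, bb A (e i) a • f i = a := by
    have hp : ∀ i : ι, bb A (e i) a • f i = bb A a (e i) • f i :=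
      fun i => by rw [bb_comm A (e i) a]
    rw [Finset.sum_congr rfl fun i _ => hp i, hE2 a]
  have e4 : ∑ i, A.mul a (A.mul (e i) (f i)) = ν • A.mul a A.one := by
    rw [← map_sum, hs, map_smul]
  rw [e1, e2, e3, e4, A.mul_one] at hsum
  rw [hsum]
  module

section SkewContr

variable (g : C →ₗ[F] C)
variable (hg1 : g A.one = 0)
variable (hgsk : ∀ x y : C, bb A (g x) y = - bb A x (g y))

include hg1 hgsk

lemma trg0 (h2' : (2:F) ≠ 0) : ∑ i, bb A (e i) (g (f i)) = 0 := by
  have hMS := MS A e f hE1 hE2 ((bb A).compl₂ g)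
  simp only [LinearMap.compl₂_apply] at hMS
  -- hMS : ∑ i, bb (e i) (g (f i)) = ∑ i, bb (f i) (g (e i))
  have hstep : ∀ i : ι, bb A (f i) (g (e i)) = - bb A (e i) (g (f i)) := by
    intro i
    have h := hgsk (f i) (e i)
    have hc := bb_comm A (g (f i)) (e i)
    linear_combination h - hc
  rw [Finset.sum_congr rfl fun i _ => hstep i, Finset.sum_neg_distrib] at hMS
  have : (2:F) * (∑ i, bb A (e i) (g (f i))) = 0 := by linear_combination hMS
  rcases mul_eq_zero.mp this with h | h
  · exact absurd h h2'
  · exact h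

lemma sum_t_smul_g : ∑ i, A.t (e i) • g (f i) = 0 := by
  have hp : ∀ i : ι, A.t (e i) • g (f i) = g (A.t (e i) • f i) :=
    fun i => (map_smul g _ _).symm
  rw [Finset.sum_congr rfl fun i _ => hp i, ← map_sum, sumT2 A e f hE1 hE2, hg1]

lemma Ug_t (h2' : (2:F) ≠ 0) : A.t (∑ i, A.mul (e i) (g (f i))) = 0 := by
  rw [t_def, bb_sum_left]
  have hstep : ∀ i : ι, bb A (A.mul (e i) (g (f i))) A.one = - bb A (e i) (g (f i)) := by
    intro i
    have h := t_mul A (e i) (g (f i))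
    have h2 := t_g A g hg1 hgsk (f i)
    rw [t_def] at h
    linear_combination h + A.t (e i) * h2
  rw [Finset.sum_congr rfl fun i _ => hstep i, Finset.sum_neg_distrib,
    trg0 A e f hE1 hE2 g hg1 hgsk h2', neg_zero]

lemma VU (h2' : (2:F) ≠ 0) :
    ∑ i, A.mul (g (f i)) (e i) = - ∑ i, A.mul (e i) (g (f i)) := by
  have hstep : ∀ i : ι, A.mul (g (f i)) (e i)
      = A.t (e i) • g (f i) + A.t (g (f i)) • e i - bb A (e i) (g (f i)) • A.one
        - A.mul (e i) (g (f i)) := by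
    intro i
    have h := ACOM A (e i) (g (f i))
    linear_combination (norm := module) h
  have hsum := Finset.sum_congr rfl fun i (_ : i ∈ Finset.univ) => hstep i
  rw [Finset.sum_sub_distrib, Finset.sum_sub_distrib, Finset.sum_add_distrib] at hsum
  have e1 := sum_t_smul_g A e f hE1 hE2 g hg1 hgsk
  have e2 : ∑ i, A.t (g (f i)) • e i = 0 := by
    have hp : ∀ i : ι, A.t (g (f i)) • e i = (0:C) := by
      intro i; rw [t_g A g hg1 hgsk (f i), zero_smul]
    rw [Finset.sum_congr rfl fun i _ => hp i, Finset.sum_const, smul_zero]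
  have e3 : ∑ i, bb A (e i) (g (f i)) • A.one = 0 := by
    rw [← Finset.sum_smul, trg0 A e f hE1 hE2 g hg1 hgsk h2', zero_smul]
  rw [e1, e2, e3] at hsum
  rw [hsum]
  module

lemma SSmul : ∑ i, A.mul (g (e i)) (f i) = - ∑ i, A.mul (e i) (g (f i)) := by
  have hAS := AS A e f hE1 hE2 A.mul g (-g) (fun x y => by
    rw [LinearMap.neg_apply, map_neg]
    exact hgsk x y)
  have hstep : ∀ i : ι, A.mul ((-g) (e i)) (f i) = - A.mul (g (e i)) (f i) := by
    intro i
    rw [LinearMap.neg_apply, map_neg, LinearMap.neg_apply]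
  rw [Finset.sum_congr rfl fun i _ => hstep i, Finset.sum_neg_distrib] at hAS
  linear_combination (norm := module) hAS

lemma Pg (h2' : (2:F) ≠ 0) (c : C) :
    ∑ i, A.mul (A.mul (e i) c) (g (f i))
      = g c + A.t c • (∑ i, A.mul (e i) (g (f i)))
        - A.mul (∑ i, A.mul (e i) (g (f i))) c := by
  have hstep : ∀ i : ι, A.mul (A.mul (e i) c) (g (f i))
      = A.t (g (f i)) • A.mul (e i) c + A.t c • A.mul (e i) (g (f i))
        - bb A c (g (f i)) • e i - A.mul (A.mul (e i) (g (f i))) c := by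
    intro i
    have h := RK3lin A (e i) c (g (f i))
    linear_combination (norm := module) h
  have hsum := Finset.sum_congr rfl fun i (_ : i ∈ Finset.univ) => hstep i
  rw [Finset.sum_sub_distrib, Finset.sum_sub_distrib, Finset.sum_add_distrib] at hsum
  have e1 : ∑ i, A.t (g (f i)) • A.mul (e i) c = 0 := by
    have hp : ∀ i : ι, A.t (g (f i)) • A.mul (e i) c = (0:C) := by
      intro i; rw [t_g A g hg1 hgsk (f i), zero_smul]
    rw [Finset.sum_congr rfl fun i _ => hp i, Finset.sum_const, smul_zero]
  have e2 : ∑ i, A.t c • A.mul (e i) (g (f i))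
      = A.t c • (∑ i, A.mul (e i) (g (f i))) := (Finset.smul_sum).symm
  have e3 : ∑ i, bb A c (g (f i)) • e i = - g c := by
    have hp : ∀ i : ι, bb A c (g (f i)) • e i = - (bb A (g c) (f i) • e i) := by
      intro i
      rw [← neg_smul]
      congr 1
      have h := hgsk c (f i)
      linear_combination h
    rw [Finset.sum_congr rfl fun i _ => hp i, Finset.sum_neg_distrib, hE1 (g c)]
  have e4 : ∑ i, A.mul (A.mul (e i) (g (f i))) c
      = A.mul (∑ i, A.mul (e i) (g (f i))) c := (mul_sum_left A _ _ _).symm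
  rw [e1, e2, e3, e4] at hsum
  rw [hsum]
  module

lemma Qg (h2' : (2:F) ≠ 0) (c : C) :
    ∑ i, A.mul (e i) (A.mul c (g (f i)))
      = A.t c • (∑ i, A.mul (e i) (g (f i))) - g c
        - A.mul c (∑ i, A.mul (e i) (g (f i))) := by
  have hstep : ∀ i : ι, A.mul (e i) (A.mul c (g (f i)))
      = A.t (e i) • A.mul c (g (f i)) + A.t c • A.mul (e i) (g (f i))
        - bb A (e i) c • g (f i) - A.mul c (A.mul (e i) (g (f i))) := by
    intro i
    have h := LK3lin A (e i) c (g (f i))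
    linear_combination (norm := module) h
  have hsum := Finset.sum_congr rfl fun i (_ : i ∈ Finset.univ) => hstep i
  rw [Finset.sum_sub_distrib, Finset.sum_sub_distrib, Finset.sum_add_distrib] at hsum
  have e1 : ∑ i, A.t (e i) • A.mul c (g (f i)) = 0 := by
    have hp : ∀ i : ι, A.t (e i) • A.mul c (g (f i)) = A.mul c (A.t (e i) • g (f i)) :=
      fun i => (map_smul (A.mul c) _ _).symm
    rw [Finset.sum_congr rfl fun i _ => hp i, ← map_sum,
      sum_t_smul_g A e f hE1 hE2 g hg1 hgsk, map_zero]
  have e2 : ∑ i, A.t c • A.mul (e i) (g (f i))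
      = A.t c • (∑ i, A.mul (e i) (g (f i))) := (Finset.smul_sum).symm
  have e3 : ∑ i, bb A (e i) c • g (f i) = g c := by
    have hp : ∀ i : ι, bb A (e i) c • g (f i) = g (bb A c (e i) • f i) := by
      intro i
      rw [map_smul, bb_comm A (e i) c]
    rw [Finset.sum_congr rfl fun i _ => hp i, ← map_sum, hE2 c]
  have e4 : ∑ i, A.mul c (A.mul (e i) (g (f i)))
      = A.mul c (∑ i, A.mul (e i) (g (f i))) := (map_sum (A.mul c) _ _).symm
  rw [e1, e2, e3, e4] at hsum
  rw [hsum]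
  module

lemma Phi_g (h2' : (2:F) ≠ 0) (c : C) :
    (∑ i, A.innerDer (e i) (g (f i))) c
      = (6:F) • g c - A.mul (∑ i, A.mul (e i) (g (f i))) c
        + A.mul c (∑ i, A.mul (e i) (g (f i))) := by
  rw [LinearMap.sum_apply]
  have hstep : ∀ i : ι, A.innerDer (e i) (g (f i)) c
      = A.mul (A.mul (e i) (g (f i))) c - A.mul (A.mul (g (f i)) (e i)) c
        - A.mul c (A.mul (e i) (g (f i))) + A.mul c (A.mul (g (f i)) (e i))
        + (3:F) • (A.mul (A.mul (e i) c) (g (f i)) - A.mul (e i) (A.mul c (g (f i)))) :=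
    fun i => innerDer_apply A (e i) (g (f i)) c
  rw [Finset.sum_congr rfl fun i _ => hstep i]
  rw [Finset.sum_add_distrib, Finset.sum_add_distrib, Finset.sum_sub_distrib,
    Finset.sum_sub_distrib]
  have h3 : ∑ i, (3:F) • (A.mul (A.mul (e i) c) (g (f i)) - A.mul (e i) (A.mul c (g (f i))))
      = (3:F) • ((∑ i, A.mul (A.mul (e i) c) (g (f i)))
          - ∑ i, A.mul (e i) (A.mul c (g (f i)))) := by
    rw [← Finset.smul_sum, Finset.sum_sub_distrib]
  rw [h3]
  have S1 : ∑ i, A.mul (A.mul (e i) (g (f i))) c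
      = A.mul (∑ i, A.mul (e i) (g (f i))) c := (mul_sum_left A _ _ _).symm
  have S2 : ∑ i, A.mul (A.mul (g (f i)) (e i)) c
      = - A.mul (∑ i, A.mul (e i) (g (f i))) c := by
    rw [← mul_sum_left, VU A e f hE1 hE2 g hg1 hgsk h2', map_neg, LinearMap.neg_apply]
  have S3 : ∑ i, A.mul c (A.mul (e i) (g (f i)))
      = A.mul c (∑ i, A.mul (e i) (g (f i))) := (map_sum (A.mul c) _ _).symm
  have S4 : ∑ i, A.mul c (A.mul (g (f i)) (e i))
      = - A.mul c (∑ i, A.mul (e i) (g (f i))) := by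
    rw [← map_sum (A.mul c), VU A e f hE1 hE2 g hg1 hgsk h2', map_neg]
  rw [S1, S2, S3, S4, Pg A e f hE1 hE2 g hg1 hgsk h2' c, Qg A e f hE1 hE2 g hg1 hgsk h2' c]
  module

end SkewContr

section DerContr

variable (h0 : A.one ≠ 0) (h2' : (2:F) ≠ 0)
variable (d : C →ₗ[F] C)
variable (hd : ∀ x y : C, d (A.mul x y) = A.mul (d x) y + A.mul x (d y))

include h0 h2' hd

lemma Wlem (c : C) :
    ∑ i, A.mul (A.mul (d (e i)) c) (f i)
      = A.mul (∑ i, A.mul (e i) (d (f i))) c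
        - A.t c • (∑ i, A.mul (e i) (d (f i))) - d c := by
  have hd1 : d A.one = 0 := d_one A d hd
  have hdsk : ∀ x y : C, bb A (d x) y = - bb A x (d y) := d_skew A h0 h2' d hd
  have hstep : ∀ i : ι, A.mul (A.mul (d (e i)) c) (f i)
      = A.t (f i) • A.mul (d (e i)) c + A.t c • A.mul (d (e i)) (f i)
        - bb A c (f i) • d (e i) - A.mul (A.mul (d (e i)) (f i)) c := by
    intro i
    have h := RK3lin A (d (e i)) c (f i)
    linear_combination (norm := module) h
  have hsum := Finset.sum_congr rfl fun i (_ : i ∈ Finset.univ) => hstep i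
  rw [Finset.sum_sub_distrib, Finset.sum_sub_distrib, Finset.sum_add_distrib] at hsum
  have e1 : ∑ i, A.t (f i) • A.mul (d (e i)) c = 0 := by
    have hp : ∀ i : ι, A.t (f i) • A.mul (d (e i)) c = A.mul (d (A.t (f i) • e i)) c := by
      intro i
      rw [map_smul d, mul_smul_left]
    rw [Finset.sum_congr rfl fun i _ => hp i, ← mul_sum_left, ← map_sum,
      sumT1 A e f hE1 hE2, hd1, map_zero, LinearMap.zero_apply]
  have e2 : ∑ i, A.t c • A.mul (d (e i)) (f i)
      = A.t c • (- ∑ i, A.mul (e i) (d (f i))) := by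
    rw [← Finset.smul_sum, SSmul A e f hE1 hE2 d hd1 hdsk]
  have e3 : ∑ i, bb A c (f i) • d (e i) = d c := by
    have hp : ∀ i : ι, bb A c (f i) • d (e i) = d (bb A c (f i) • e i) :=
      fun i => (map_smul d _ _).symm
    rw [Finset.sum_congr rfl fun i _ => hp i, ← map_sum, hE1 c]
  have e4 : ∑ i, A.mul (A.mul (d (e i)) (f i)) c
      = A.mul (- ∑ i, A.mul (e i) (d (f i))) c := by
    rw [← mul_sum_left, SSmul A e f hE1 hE2 d hd1 hdsk]
  rw [e1, e2, e3, e4, map_neg, LinearMap.neg_apply] at hsum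
  rw [hsum]
  module

lemma Eval2 (c : C) :
    ∑ i, A.mul (e i) (d (A.mul (f i) c))
      = A.mul (∑ i, A.mul (e i) (d (f i))) c - d c := by
  have hdsk : ∀ x y : C, bb A (d x) y = - bb A x (d y) := d_skew A h0 h2' d hd
  have hAS := AS A e f hE1 hE2 A.mul (d ∘ₗ A.mul.flip c)
    (A.mul.flip c ∘ₗ d - A.t c • d) (fun x y => by
      simp only [LinearMap.comp_apply, LinearMap.flip_apply, LinearMap.sub_apply,
        LinearMap.smul_apply, map_sub, map_smul, smul_eq_mul]
      have h1 := hdsk (A.mul x c) y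
      have h2 := I2 A x c (d y)
      linear_combination h1 - h2)
  simp only [LinearMap.comp_apply, LinearMap.flip_apply] at hAS
  -- hAS : ∑ i, M (e i) (d (M (f i) c)) = ∑ i, M ((flip c ∘ d - tc • d) (e i)) (f i)
  have hstep : ∀ i : ι, A.mul ((A.mul.flip c ∘ₗ d - A.t c • d) (e i)) (f i)
      = A.mul (A.mul (d (e i)) c) (f i) - A.t c • A.mul (d (e i)) (f i) := by
    intro i
    simp only [LinearMap.sub_apply, LinearMap.comp_apply, LinearMap.flip_apply,
      LinearMap.smul_apply, map_sub, map_smul, LinearMap.sub_apply]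
  rw [Finset.sum_congr rfl fun i _ => hstep i, Finset.sum_sub_distrib] at hAS
  have hW := Wlem A e f hE1 hE2 h0 h2' d hd c
  have hd1 : d A.one = 0 := d_one A d hd
  have e2 : ∑ i, A.t c • A.mul (d (e i)) (f i)
      = A.t c • (- ∑ i, A.mul (e i) (d (f i))) := by
    rw [← Finset.smul_sum, SSmul A e f hE1 hE2 d hd1 hdsk]
  rw [hW, e2] at hAS
  rw [hAS]
  module

lemma G_eq (ν : F) (hν : (2:F) * ν = 2 - ∑ i, bb A (e i) (f i)) (c : C) :
    ∑ i, A.mul (e i) (A.mul (d (f i)) c)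
      = A.mul (∑ i, A.mul (e i) (d (f i))) c - d c - ν • d c := by
  have hEval2 := Eval2 A e f hE1 hE2 h0 h2' d hd c
  have hstep : ∀ i : ι, A.mul (e i) (d (A.mul (f i) c))
      = A.mul (e i) (A.mul (d (f i)) c) + A.mul (e i) (A.mul (f i) (d c)) := by
    intro i
    rw [hd (f i) c, map_add]
  rw [Finset.sum_congr rfl fun i _ => hstep i, Finset.sum_add_distrib,
    X2 A e f hE1 hE2 h2' ν hν (d c)] at hEval2
  linear_combination (norm := module) hEval2

lemma Ptilde (c : C) :
    ∑ i, A.mul (A.mul c (e i)) (d (f i))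
      = A.mul (∑ i, A.mul (e i) (d (f i))) c - (2:F) • d c := by
  have hd1 : d A.one = 0 := d_one A d hd
  have hdsk : ∀ x y : C, bb A (d x) y = - bb A x (d y) := d_skew A h0 h2' d hd
  have hstep : ∀ i : ι, A.mul (A.mul c (e i)) (d (f i))
      = A.t c • A.mul (e i) (d (f i)) + A.t (e i) • A.mul c (d (f i))
        - bb A c (e i) • d (f i) - A.mul (A.mul (e i) c) (d (f i)) := by
    intro i
    have h := congrArg (fun w => A.mul w (d (f i))) (ACOM A c (e i))
    simp only [map_add, map_sub, map_smul, LinearMap.add_apply, LinearMap.sub_apply,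
      LinearMap.smul_apply, A.one_mul] at h
    linear_combination (norm := module) h
  have hsum := Finset.sum_congr rfl fun i (_ : i ∈ Finset.univ) => hstep i
  rw [Finset.sum_sub_distrib, Finset.sum_sub_distrib, Finset.sum_add_distrib] at hsum
  have e1 : ∑ i, A.t c • A.mul (e i) (d (f i))
      = A.t c • (∑ i, A.mul (e i) (d (f i))) := (Finset.smul_sum).symm
  have e2 : ∑ i, A.t (e i) • A.mul c (d (f i)) = 0 := by
    have hp : ∀ i : ι, A.t (e i) • A.mul c (d (f i)) = A.mul c (d (A.t (e i) • f i)) := by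
      intro i
      rw [map_smul d, map_smul (A.mul c)]
    rw [Finset.sum_congr rfl fun i _ => hp i, ← map_sum (A.mul c), ← map_sum d,
      sumT2 A e f hE1 hE2, hd1, map_zero]
  have e3 : ∑ i, bb A c (e i) • d (f i) = d c := by
    have hp : ∀ i : ι, bb A c (e i) • d (f i) = d (bb A c (e i) • f i) :=
      fun i => (map_smul d _ _).symm
    rw [Finset.sum_congr rfl fun i _ => hp i, ← map_sum, hE2 c]
  have e4 := Pg A e f hE1 hE2 d hd1 hdsk h2' c
  rw [e1, e2, e3, e4] at hsum
  rw [hsum]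
  module

lemma adu (ν : F) (hν : (2:F) * ν = 2 - ∑ i, bb A (e i) (f i)) (c : C) :
    A.mul (∑ i, A.mul (e i) (d (f i))) c - A.mul c (∑ i, A.mul (e i) (d (f i)))
      = ((3:F) + ν) • d c := by
  have hC : ∑ i, (A.mul (A.mul (e i) (d (f i))) c - A.mul (e i) (A.mul (d (f i)) c))
      = ((1:F) + ν) • d c := by
    rw [Finset.sum_sub_distrib, ← mul_sum_left, G_eq A e f hE1 hE2 h0 h2' d hd ν hν c]
    module
  have hC2 : ∑ i, (A.mul (A.mul c (e i)) (d (f i)) - A.mul c (A.mul (e i) (d (f i))))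
      = A.mul (∑ i, A.mul (e i) (d (f i))) c
        - A.mul c (∑ i, A.mul (e i) (d (f i))) - (2:F) • d c := by
    rw [Finset.sum_sub_distrib, Ptilde A e f hE1 hE2 h0 h2' d hd c,
      ← map_sum (A.mul c)]
    module
  have hcyc : ∀ i : ι, A.mul (A.mul c (e i)) (d (f i)) - A.mul c (A.mul (e i) (d (f i)))
      = A.mul (A.mul (e i) (d (f i))) c - A.mul (e i) (A.mul (d (f i)) c) :=
    fun i => asso_cyc A c (e i) (d (f i))
  rw [Finset.sum_congr rfl fun i _ => hcyc i, hC] at hC2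
  linear_combination (norm := module) -hC2

end DerContr

lemma U2lem (h2' : (2:F) ≠ 0) (ν : F) (hν : (2:F) * ν = 2 - ∑ i, bb A (e i) (f i))
    (u : C) (htu : A.t u = 0) :
    ∑ i, A.mul (e i) ((A.mul u - A.mul.flip u) (f i)) = (-(2*ν)) • u := by
  have hstep : ∀ i : ι, A.mul (e i) ((A.mul u - A.mul.flip u) (f i))
      = A.mul (e i) (A.mul u (f i)) - A.mul (e i) (A.mul (f i) u) := by
    intro i; rw [LinearMap.sub_apply, LinearMap.flip_apply, map_sub]
  rw [Finset.sum_congr rfl fun i _ => hstep i, Finset.sum_sub_distrib,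
    Jlem A e f hE1 hE2 h2' ν hν u, X2 A e f hE1 hE2 h2' ν hν u, htu, zero_smul, zero_sub]
  module

end Contr

lemma prime_cast_ne_zero {p : ℕ} (hp : p.Prime) (h : ringChar F ≠ p) : (p : F) ≠ 0 := by
  intro h0
  have hdvd : ringChar F ∣ p := (CharP.cast_eq_zero_iff F (ringChar F) p).mp h0
  rcases (Nat.Prime.eq_one_or_self_of_dvd hp _ hdvd) with h1 | h1
  · exact CharP.char_ne_one F (ringChar F) h1
  · exact h h1

end DerInner

/-- In characteristic `≠ 2, 3`, every derivation of a composition algebra is inner: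
it belongs to the linear span of the maps `D_{a,b}`. -/
theorem derivation_of_composition_algebra_is_inner {F : Type*} [Field F] {C : Type*}
    [AddCommGroup C] [Module F C] [FiniteDimensional F C]
    (h2 : ringChar F ≠ 2) (h3 : ringChar F ≠ 3)
    (A : CompositionAlgebra F C)
    (d : C →ₗ[F] C)
    (hd : ∀ x y : C, d (A.mul x y) = A.mul (d x) y + A.mul x (d y)) :
    d ∈ Submodule.span F (Set.range fun p : C × C => A.innerDer p.1 p.2) := by
  classical
  open DerInner in
  by_cases h0 : A.one = 0
  · have hall : ∀ x : C, x = 0 := by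
      intro x
      have hx := A.one_mul x
      rw [h0] at hx
      rw [← hx, map_zero, LinearMap.zero_apply]
    have hdz : d = 0 := LinearMap.ext fun x => by
      rw [LinearMap.zero_apply]; exact hall (d x)
    rw [hdz]
    exact Submodule.zero_mem _
  · have h2' : (2:F) ≠ 0 := by
      have := DerInner.prime_cast_ne_zero (F := F) Nat.prime_two h2
      simpa using this
    have h3' : (3:F) ≠ 0 := by
      have := DerInner.prime_cast_ne_zero (F := F) Nat.prime_three h3
      simpa using this
    have h72 : (72:F) ≠ 0 := by
      have : (72:F) = 2^3 * 3^2 := by norm_num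
      rw [this]
      exact mul_ne_zero (pow_ne_zero _ h2') (pow_ne_zero _ h3')
    have hB : (DerInner.bb A).Nondegenerate := DerInner.bb_nondeg A
    set e0 : Module.Basis (Fin (Module.finrank F C)) F C := Module.finBasis F C with he0
    set f0 : Module.Basis (Fin (Module.finrank F C)) F C :=
      LinearMap.BilinForm.dualBasis (DerInner.bb A) hB e0 with hf0
    set e : Fin (Module.finrank F C) → C := ⇑e0 with he
    set f : Fin (Module.finrank F C) → C := ⇑f0 with hf
    have hE2 : ∀ x : C, ∑ i, DerInner.bb A x (e i) • f i = x := by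
      intro x
      conv_rhs => rw [← f0.sum_repr x]
      refine Finset.sum_congr rfl fun i _ => ?_
      rw [hf0, LinearMap.BilinForm.dualBasis_repr_apply]
    have hE1 : ∀ x : C, ∑ i, DerInner.bb A x (f i) • e i = x := by
      intro x
      refine DerInner.eq_of_bb_eq A fun z => ?_
      rw [DerInner.bb_sum_left]
      conv_rhs => rw [← hE2 z]
      rw [map_sum (DerInner.bb A x)]
      refine Finset.sum_congr rfl fun i _ => ?_
      rw [DerInner.bb_smul_left, map_smul, smul_eq_mul]
      linear_combination DerInner.bb A x (f i) * (DerInner.bb_comm A (e i) z)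
    set NN := ∑ i, DerInner.bb A (e i) (f i) with hNN
    set ν : F := (2 - NN) / 2 with hνdef
    have hν : (2:F) * ν = 2 - NN := by
      rw [hνdef, mul_comm]
      exact div_mul_cancel₀ _ h2'
    have hd1 : d A.one = 0 := DerInner.d_one A d hd
    have hdsk : ∀ x y : C, DerInner.bb A (d x) y = - DerInner.bb A x (d y) :=
      DerInner.d_skew A h0 h2' d hd
    set u : C := ∑ i, A.mul (e i) (d (f i)) with hu
    have htu : A.t u = 0 := DerInner.Ug_t A e f hE1 hE2 d hd1 hdsk h2'
    set g2 : C →ₗ[F] C := A.mul u - A.mul.flip u with hg2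
    have hg21 : g2 A.one = 0 := DerInner.ad_one A u
    have hg2sk : ∀ x y : C, DerInner.bb A (g2 x) y = - DerInner.bb A x (g2 y) :=
      DerInner.ad_skew A u htu
    have hU2 : ∑ i, A.mul (e i) (g2 (f i)) = (-(2*ν)) • u :=
      DerInner.U2lem A e f hE1 hE2 h2' ν hν u htu
    have hadu : ∀ c : C, A.mul u c - A.mul c u = ((3:F) + ν) • d c := fun c =>
      DerInner.adu A e f hE1 hE2 h0 h2' d hd ν hν c
    have hPhi1 : ∀ c : C, (∑ i, A.innerDer (e i) (d (f i))) c = ((3:F) - ν) • d c := by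
      intro c
      rw [DerInner.Phi_g A e f hE1 hE2 d hd1 hdsk h2' c]
      rw [← hu]
      have h := hadu c
      linear_combination (norm := module) -h
    have hPhi2 : ∀ c : C,
        (∑ i, A.innerDer (e i) (g2 (f i))) c = (((6:F)+2*ν) * ((3:F)+ν)) • d c := by
      intro c
      rw [DerInner.Phi_g A e f hE1 hE2 g2 hg21 hg2sk h2' c]
      rw [hU2]
      have hgc : g2 c = A.mul u c - A.mul c u := by
        rw [hg2, LinearMap.sub_apply, LinearMap.flip_apply]
      rw [hgc]
      have h := hadu c
      have hL : A.mul ((-(2*ν)) • u) c = (-(2*ν)) • A.mul u c :=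
        DerInner.mul_smul_left A _ _ _
      have hR : A.mul c ((-(2*ν)) • u) = (-(2*ν)) • A.mul c u := map_smul (A.mul c) _ _
      rw [hL, hR]
      linear_combination (norm := module) ((6:F)+2*ν) • h
    have key : d = (72:F)⁻¹ • (∑ i, A.innerDer (e i) (g2 (f i)))
        + ((72:F)⁻¹ * (2*ν+18)) • (∑ i, A.innerDer (e i) (d (f i))) := by
      apply LinearMap.ext; intro c
      simp only [LinearMap.add_apply, LinearMap.smul_apply]
      rw [hPhi2 c, hPhi1 c, smul_smul, smul_smul, ← add_smul]
      have hs : (72:F)⁻¹ * (((6:F)+2*ν) * ((3:F)+ν))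
          + (72:F)⁻¹ * (2*ν+18) * ((3:F) - ν) = 1 := by
        field_simp
        ring
      rw [hs, one_smul]
    rw [key]
    refine Submodule.add_mem _ ?_ ?_
    · refine Submodule.smul_mem _ _ (Submodule.sum_mem _ fun i _ => ?_)
      exact Submodule.subset_span ⟨(e i, g2 (f i)), rfl⟩
    · refine Submodule.smul_mem _ _ (Submodule.sum_mem _ fun i _ => ?_)
      exact Submodule.subset_span ⟨(e i, d (f i)), rfl⟩
end

section
/- Cyclic symmetry of the triality Lie algebra: let V be a finite-dimensional vector space over a field F of characteristic ≠ 2, equipped with a nondegenerate symmetric bilinear form b and a bilinear product ∗ satisfying b(x∗y, z) = b(x, y∗z) for all x, y, z ∈ V. If d₀, d₁, d₂ are b-skew linear endomorphisms of V (b(dᵢ(x),y) + b(x,dᵢ(y)) = 0 for all x,y) such that d₀(x∗y) = d₁(x)∗y + x∗d₂(y) for all x, y ∈ V, then also d₂(x∗y) = d₀(x)∗y + x∗d₁(y) for all x, y ∈ V; in other words, the map θ : (d₀,d₁,d₂) ↦ (d₂,d₀,d₁) preserves the triality Lie algebra. -/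
/-- Cyclic symmetry of the triality Lie algebra: if `(d₀,d₁,d₂)` is a triple of
`b`-skew endomorphisms with `d₀(x∗y) = d₁(x)∗y + x∗d₂(y)` for a product `∗`
associative with respect to the nondegenerate symmetric bilinear form `b`, then
also `d₂(x∗y) = d₀(x)∗y + x∗d₁(y)`. -/
theorem triality_cyclic_symmetry {F V : Type*} [Field F]
    [AddCommGroup V] [Module F V] [FiniteDimensional F V]
    (hF : ringChar F ≠ 2)
    (b : V →ₗ[F] V →ₗ[F] F)
    (hsymm : ∀ x y : V, b x y = b y x)
    (hnondeg : ∀ x : V, (∀ y : V, b x y = 0) → x = 0)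
    (mul : V →ₗ[F] V →ₗ[F] V)
    (hassoc : ∀ x y z : V, b (mul x y) z = b x (mul y z))
    (d₀ d₁ d₂ : V →ₗ[F] V)
    (h₀ : ∀ x y : V, b (d₀ x) y + b x (d₀ y) = 0)
    (h₁ : ∀ x y : V, b (d₁ x) y + b x (d₁ y) = 0)
    (h₂ : ∀ x y : V, b (d₂ x) y + b x (d₂ y) = 0)
    (htri : ∀ x y : V, d₀ (mul x y) = mul (d₁ x) y + mul x (d₂ y)) :
    ∀ x y : V, d₂ (mul x y) = mul (d₀ x) y + mul x (d₁ y) := by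
  intro x y
  have key : ∀ z : V, b (d₂ (mul x y) - (mul (d₀ x) y + mul x (d₁ y))) z = 0 := by
    intro z
    have e1 : b (d₂ (mul x y)) z = - b (mul x y) (d₂ z) := by
      have := h₂ (mul x y) z; linear_combination this
    have e2 : mul y (d₂ z) = d₀ (mul y z) - mul (d₁ y) z := by
      have := htri y z; rw [this]; abel
    have e3 : b x (d₀ (mul y z)) = - b (d₀ x) (mul y z) := by
      have := h₀ x (mul y z); linear_combination this
    have : b (d₂ (mul x y)) z = b (mul (d₀ x) y) z + b (mul x (d₁ y)) z := by
      rw [e1, hassoc x y (d₂ z), e2, hassoc (d₀ x) y z, hassoc x (d₁ y) z]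
      simp only [map_sub, LinearMap.sub_apply]
      rw [e3]; ring
    simp only [map_sub, map_add, LinearMap.sub_apply, LinearMap.add_apply]
    rw [this]; ring
  have := hnondeg _ key
  rw [sub_eq_zero] at this
  exact this
end
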